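/- arXiv:1409.2843 — 7 statements merged into one kernel-verified Lean document; each statement's English description precedes it below -/
import Mathlib

section
/- For every prime p and every multiset J of elements of (ZMod p)^3 with |J| = 7p - 3, there exists a sub-multiset of J of cardinality 3p whose sum is 0. -/
/-!
Chevalley–Warning, applied to a polynomial whose value at `x` depends only on the support of `x`,
shows that for more than `m + 4 (p - 1)` vectors of `𝔽_p³` the sum of `(-1)^|S| * C(|S|, m)` over
the zero-sum subfamilies `S` with `p ∣ |S|` vanishes mod `p`; for `m = j p`, Lucas's theorem turns
`C(|S|, j p)` into `C(|S| / p, j)`. With `m = 0`, any `4p - 3` vectors contain a zero-sum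
subfamily of size `p`, `2p` or `3p`.

Suppose `7p - 3` vectors have no zero-sum subfamily of size `3p`. Extracting such subfamilies
repeatedly rules out size `p` too; for `p = 2` this makes the vectors distinct, impossible as
`11 > 8`. For odd `p`, extract one of size `2p`. On the remaining `5p - 3` vectors the congruences
for `j = 0, 1` force a zero-sum subfamily of size `4p`. Together they form a zero-sum family of
size `6p` whose zero-sum subfamilies have sizes `0, 2p, 4p, 6p` only, and the congruences for
`j = 0, 1, 2` there combine to `16 ≡ 0 (mod p)`.
-/

open Finset MvPolynomial

lemma sum_option_elim_eq_zero_iff {ι κ R : Type*} [Semiring R] (a : ι → κ → R) (S : Finset ι) :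
    ∑ i ∈ S, (fun c => Option.elim c 1 (a i)) = 0 ↔ ∑ i ∈ S, a i = 0 ∧ (#S : R) = 0 := by
  simp only [funext_iff, Option.forall, Finset.sum_apply, Option.elim, Pi.zero_apply, sum_const,
    nsmul_eq_mul, mul_one]
  exact and_comm

lemma Finset.sum_powerset_eq_sum_map_subtype {ι β : Type*} [AddCommMonoid β] (M : Finset ι)
    (f : Finset ι → β) :
    ∑ S ∈ M.powerset, f S = ∑ S : Finset M, f (S.map (Function.Embedding.subtype _)) := by
  classical
  have hmap : ∀ S ∈ M.powerset, (S.subtype (· ∈ M)).map (Function.Embedding.subtype _) = S :=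
    fun S hS => subtype_map_of_mem (mem_powerset.mp hS)
  refine sum_nbij' (fun S => S.subtype (· ∈ M)) (fun S => S.map (Function.Embedding.subtype _))
    (by simp) (fun S _ => by simp +contextual [subset_iff]) hmap (fun S _ => by ext; simp)
    (fun S hS => by rw [hmap S hS])

section Degrees

variable {R σ : Type*} [CommRing R]

lemma totalDegree_sum_C_mul_X_pow_le [Nontrivial R] [Fintype σ] (b : σ → R) (n : ℕ) :
    (∑ i, C (b i) * X i ^ n).totalDegree ≤ n :=
  totalDegree_finsetSum_le fun i _ =>
    (totalDegree_mul _ _).trans (by rw [totalDegree_C, totalDegree_X_pow, zero_add])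

lemma totalDegree_sum_powersetCard_prod_X_pow_le [Nontrivial R] [Fintype σ] (m n : ℕ) :
    (∑ T ∈ powersetCard m (univ : Finset σ), ∏ i ∈ T, (X i ^ n : MvPolynomial σ R)).totalDegree
      ≤ m * n := by
  refine totalDegree_finsetSum_le fun T hT => (totalDegree_finsetProd _ _).trans ?_
  simp [totalDegree_X_pow, (mem_powersetCard.mp hT).2]

lemma totalDegree_one_sub_pow_le (f : MvPolynomial σ R) (n : ℕ) :
    (1 - f ^ n).totalDegree ≤ n * f.totalDegree :=
  (totalDegree_sub _ _).trans (by simpa using totalDegree_pow f n)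

end Degrees

section PolynomialMethod

variable {K σ : Type*} [Field K] [Fintype K] [DecidableEq K]

local notation "q" => Fintype.card K

lemma FiniteField.pow_card_sub_one_eq_ite (a : K) : a ^ (q - 1) = if a ≠ 0 then 1 else 0 := by
  split_ifs with ha
  · exact FiniteField.pow_card_sub_one_eq_one a ha
  · simp [not_not.mp ha, Nat.sub_eq_zero_iff_le, Fintype.one_lt_card]

lemma card_filter_support_eq_pow {R : Type*} [Fintype σ] [DecidableEq σ] [Fintype R] [Zero R]
    [DecidableEq R] (S : Finset σ) :
    #{x : σ → R | ({i | x i ≠ 0} : Finset σ) = S} = (Fintype.card R - 1) ^ #S := by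
  have : ({x : σ → R | ({i | x i ≠ 0} : Finset σ) = S} : Finset _) =
      Fintype.piFinset fun i => if i ∈ S then univ.erase 0 else {0} := by
    ext x
    simp only [mem_filter, mem_univ, true_and, Fintype.mem_piFinset, Finset.ext_iff]
    refine forall_congr' fun i => ?_
    split_ifs with hi <;> simp [hi]
  rw [this, Fintype.card_piFinset]
  simp [apply_ite, Finset.card_erase_of_mem, Finset.prod_ite_mem]

lemma eval_sum_C_mul_X_pow_card_sub_one [Fintype σ] (b : σ → K) (x : σ → K) :
    eval x (∑ i, C (b i) * X i ^ (q - 1)) = ∑ i with x i ≠ 0, b i := by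
  simp [FiniteField.pow_card_sub_one_eq_ite, Finset.sum_filter]

lemma eval_sum_powersetCard_prod_X_pow_card_sub_one [Fintype σ] (m : ℕ) (x : σ → K) :
    eval x (∑ T ∈ powersetCard m univ, ∏ i ∈ T, X i ^ (q - 1)) = (#{i | x i ≠ 0}).choose m := by
  simp only [map_sum, map_prod, map_pow, eval_X, FiniteField.pow_card_sub_one_eq_ite, prod_boole]
  rw [sum_boole, ← card_powersetCard]
  congr 2
  ext T
  simp [mem_powersetCard, subset_iff, and_comm]

lemma eval_one_sub_pow_card_sub_one (f : MvPolynomial σ K) (x : σ → K) :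
    eval x (1 - f ^ (q - 1)) = if eval x f = 0 then 1 else 0 := by
  rw [map_sub, map_one, map_pow, FiniteField.pow_card_sub_one_eq_ite]
  split_ifs <;> simp_all

theorem sum_neg_one_pow_mul_choose_eq_zero [Fintype σ] [DecidableEq σ] {κ : Type*} [Fintype κ]
    (b : σ → κ → K) (m : ℕ) (h : m + Fintype.card κ * (q - 1) < Fintype.card σ) :
    ∑ S : Finset σ with ∑ i ∈ S, b i = 0, (-1 : K) ^ #S * ((#S).choose m : K) = 0 := by
  set F : MvPolynomial σ K := (∏ c, (1 - (∑ i, C (b i c) * X i ^ (q - 1)) ^ (q - 1))) *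
    ∑ T ∈ powersetCard m univ, ∏ i ∈ T, X i ^ (q - 1)
  have hF : ∀ x, eval x F = if ∑ i with x i ≠ 0, b i = 0 then (#{i | x i ≠ 0}).choose m else 0 := by
    intro x
    rw [eval_mul, eval_sum_powersetCard_prod_X_pow_card_sub_one, map_prod]
    simp only [eval_one_sub_pow_card_sub_one, eval_sum_C_mul_X_pow_card_sub_one, prod_boole,
      ← Finset.sum_apply, funext_iff]
    split_ifs <;> simp_all
  have hfiber : ∀ S : Finset σ, ∑ x with ({i | x i ≠ 0} : Finset σ) = S, eval x F =
      if ∑ i ∈ S, b i = 0 then (-1 : K) ^ #S * ((#S).choose m : K) else 0 := by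
    intro S
    rw [sum_congr rfl fun x hx => (hF x).trans (by rw [(mem_filter.mp hx).2]), sum_const,
      card_filter_support_eq_pow, nsmul_eq_mul, Nat.cast_pow, Nat.cast_sub Fintype.card_pos,
      FiniteField.cast_card_eq_zero, Nat.cast_one, zero_sub]
    split_ifs <;> simp
  have hdeg : F.totalDegree < (q - 1) * Fintype.card σ := by
    have hq : 0 < q - 1 := Nat.sub_pos_of_lt Fintype.one_lt_card
    calc F.totalDegree ≤ Fintype.card κ * ((q - 1) * (q - 1)) + m * (q - 1) := by
          refine (totalDegree_mul _ _).trans (add_le_add ?_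
            (totalDegree_sum_powersetCard_prod_X_pow_le m _))
          refine (totalDegree_finsetProd _ _).trans ((sum_le_sum fun c _ =>
            (totalDegree_one_sub_pow_le _ _).trans
              (Nat.mul_le_mul_left _ (totalDegree_sum_C_mul_X_pow_le _ _))).trans_eq ?_)
          rw [sum_const, card_univ, smul_eq_mul]
      _ < (q - 1) * Fintype.card σ := by nlinarith
  calc ∑ S : Finset σ with ∑ i ∈ S, b i = 0, (-1 : K) ^ #S * ((#S).choose m : K)
      = ∑ S : Finset σ, ∑ x with ({i | x i ≠ 0} : Finset σ) = S, eval x F := by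
        rw [sum_filter]
        exact sum_congr rfl fun S _ => (hfiber S).symm
    _ = ∑ x, eval x F := sum_fiberwise _ _ _
    _ = 0 := sum_eval_eq_zero F hdeg

theorem sum_powerset_neg_one_pow_mul_choose_eq_zero {ι κ : Type*} [DecidableEq ι]
    [Fintype κ] (a : ι → κ → K) (M : Finset ι) (m : ℕ)
    (h : m + (Fintype.card κ + 1) * (q - 1) < #M) :
    ∑ S ∈ M.powerset with ∑ i ∈ S, a i = 0 ∧ (#S : K) = 0,
      (-1 : K) ^ #S * ((#S).choose m : K) = 0 := by
  -- appending a coordinate `1` to each vector makes `(#S : K) = 0` part of the zero-sum condition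
  have key := sum_neg_one_pow_mul_choose_eq_zero (σ := M) (fun i c => Option.elim c 1 (a i)) m
    (by simpa using h)
  rw [sum_filter] at key ⊢
  rw [sum_powerset_eq_sum_map_subtype]
  simpa [sum_option_elim_eq_zero_iff] using key

end PolynomialMethod

section ZeroSumSubsets

variable {ι G : Type*} [AddCommMonoid G] [DecidableEq G]

def zeroSumSubsets (a : ι → G) (M : Finset ι) (d : ℕ) : Finset (Finset ι) :=
  {S ∈ M.powerset | ∑ i ∈ S, a i = 0 ∧ #S = d}

variable {a : ι → G} {M S : Finset ι} {d : ℕ}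

@[simp]
lemma mem_zeroSumSubsets : S ∈ zeroSumSubsets a M d ↔ S ⊆ M ∧ ∑ i ∈ S, a i = 0 ∧ #S = d := by
  simp [zeroSumSubsets]

lemma zeroSumSubsets_zero : zeroSumSubsets a M 0 = {∅} := by
  ext S
  simp only [mem_zeroSumSubsets, card_eq_zero, mem_singleton]
  exact ⟨fun h => h.2.2, by rintro rfl; simp⟩

lemma zeroSumSubsets_card_self (h : ∑ i ∈ M, a i = 0) : zeroSumSubsets a M #M = {M} := by
  ext S
  simp only [mem_zeroSumSubsets, mem_singleton]
  constructor
  · exact fun ⟨hS, _, hcard⟩ => eq_of_subset_of_card_le hS hcard.ge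
  · rintro rfl
    exact ⟨subset_rfl, h, rfl⟩

lemma zeroSumSubsets_eq_empty_iff :
    zeroSumSubsets a M d = ∅ ↔ ∀ S ⊆ M, ∑ i ∈ S, a i = 0 → #S ≠ d := by
  simp [eq_empty_iff_forall_notMem]

lemma zeroSumSubsets_eq_empty_of_subset {M' : Finset ι} (h : M' ⊆ M)
    (hM : zeroSumSubsets a M d = ∅) : zeroSumSubsets a M' d = ∅ := by
  rw [zeroSumSubsets_eq_empty_iff] at hM ⊢
  exact fun S hS => hM S (hS.trans h)

end ZeroSumSubsets

section PrimeField

variable {p : ℕ} [Fact p.Prime]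

lemma ZMod.natCast_choose_mul_mul (k j : ℕ) :
    ((p * k).choose (p * j) : ZMod p) = k.choose j :=
  (ZMod.natCast_eq_natCast_iff _ _ _).mpr Choose.choose_mul_mul_modEq_choose_nat

theorem sum_card_zeroSumSubsets_mul_choose_eq_zero {ι κ : Type*} [DecidableEq ι] [Fintype κ]
    (a : ι → κ → ZMod p) (M : Finset ι) (j : ℕ) (ks : Finset ℕ)
    (hks : ∀ S ⊆ M, ∑ i ∈ S, a i = 0 → p ∣ #S → ∃ k ∈ ks, #S = p * k)
    (h : p * j + (Fintype.card κ + 1) * (p - 1) < #M) :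
    ∑ k ∈ ks, (#(zeroSumSubsets a M (p * k)) : ZMod p) * ((-1) ^ (p * k) * (k.choose j : ZMod p))
      = 0 := by
  have hp := (Fact.out : p.Prime).pos
  have key := sum_powerset_neg_one_pow_mul_choose_eq_zero a M (p * j) (by rwa [ZMod.card])
  simp only [ZMod.natCast_eq_zero_iff] at key
  rw [← sum_fiberwise_of_maps_to (g := fun S => #S / p) (t := ks) ?_] at key
  · refine Eq.trans (sum_congr rfl fun k _ => ?_) key
    have hfiber : {S ∈ {S ∈ M.powerset | ∑ i ∈ S, a i = 0 ∧ p ∣ #S} | #S / p = k} =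
        zeroSumSubsets a M (p * k) := by
      ext S
      simp only [mem_filter, mem_powerset, mem_zeroSumSubsets]
      constructor
      · rintro ⟨⟨hSM, hsum, hdvd⟩, rfl⟩
        exact ⟨hSM, hsum, (Nat.mul_div_cancel' hdvd).symm⟩
      · rintro ⟨hSM, hsum, hcard⟩
        exact ⟨⟨hSM, hsum, hcard ▸ dvd_mul_right p k⟩, by rw [hcard, Nat.mul_div_cancel_left k hp]⟩
    rw [hfiber, sum_congr rfl fun S hS => by rw [(mem_zeroSumSubsets.mp hS).2.2],
      sum_const, nsmul_eq_mul, ZMod.natCast_choose_mul_mul]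
  · intro S hS
    obtain ⟨hSM, hsum, hdvd⟩ := by simpa using hS
    obtain ⟨k, hk, hcard⟩ := hks S hSM hsum hdvd
    simpa [hcard, hp] using hk

theorem exists_nonempty_zeroSum_dvd_card {ι κ : Type*} [DecidableEq ι] [Fintype κ]
    (a : ι → κ → ZMod p) (M : Finset ι) (h : (Fintype.card κ + 1) * (p - 1) < #M) :
    ∃ S ⊆ M, S.Nonempty ∧ ∑ i ∈ S, a i = 0 ∧ p ∣ #S := by
  by_contra! hne
  have key := sum_card_zeroSumSubsets_mul_choose_eq_zero a M 0 {0}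
    (fun S hS hsum hdvd => ⟨0, mem_singleton_self 0, by
      rw [mul_zero, card_eq_zero, ← not_nonempty_iff_eq_empty]
      exact fun hS' => hne S hS hS' hsum hdvd⟩) (by simpa using h)
  simp [zeroSumSubsets_zero] at key

lemma eq_two_of_two_pow_eq_zero {n : ℕ} (h : (2 : ZMod p) ^ n = 0) : p = 2 := by
  have hp : p.Prime := Fact.out
  have : p ∣ 2 ^ n := (ZMod.natCast_eq_zero_iff _ _).mp (by exact_mod_cast h)
  exact (Nat.prime_dvd_prime_iff_eq hp Nat.prime_two).mp (hp.dvd_of_dvd_pow this)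

end PrimeField

lemma card_le_two_pow_of_zeroSumSubsets_two_eq_empty {ι κ : Type*} [DecidableEq ι] [Fintype κ]
    [DecidableEq κ] {a : ι → κ → ZMod 2} {M : Finset ι} (h : zeroSumSubsets a M 2 = ∅) :
    #M ≤ 2 ^ Fintype.card κ := by
  have hinj : Set.InjOn a M := by
    intro i hi j hj hij
    by_contra hne
    refine (zeroSumSubsets_eq_empty_iff.mp h) {i, j}
      (insert_subset hi (singleton_subset_iff.mpr hj)) ?_ (card_pair hne)
    rw [sum_pair hne, hij]
    ext c
    exact CharTwo.add_self_eq_zero _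
  simpa using card_le_card_of_injOn a (fun _ _ => mem_univ _) hinj

section ThreeDimensional

variable {p : ℕ} [Fact p.Prime] {ι : Type*} [DecidableEq ι] {a : ι → Fin 3 → ZMod p}

theorem exists_zeroSum_card_eq_mul_of_le_card {M : Finset ι} (hM : 4 * p - 3 ≤ #M) :
    ∃ S ⊆ M, ∑ i ∈ S, a i = 0 ∧ (#S = p ∨ #S = 2 * p ∨ #S = 3 * p) := by
  have hp := (Fact.out : p.Prime).two_le
  obtain ⟨M', hM'M, hM'⟩ := exists_subset_card_eq hM
  obtain ⟨S, hSM', hS, hsum, k, hk⟩ := exists_nonempty_zeroSum_dvd_card a M'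
    (by rw [hM', Fintype.card_fin]; omega)
  have hk4 : k < 4 := Nat.lt_of_mul_lt_mul_left (a := p) (by have := card_le_card hSM'; omega)
  have hk0 : k ≠ 0 := by rintro rfl; simp [← card_pos, hk] at hS
  refine ⟨S, hSM'.trans hM'M, hsum, ?_⟩
  interval_cases k <;> omega

lemma exists_zeroSum_disjoint_card_eq_mul {M T : Finset ι} (hT : T ⊆ M) (hM : 4 * p - 3 + #T ≤ #M) :
    ∃ S ⊆ M, Disjoint T S ∧ ∑ i ∈ S, a i = 0 ∧ (#S = p ∨ #S = 2 * p ∨ #S = 3 * p) := by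
  obtain ⟨S, hS, hsum, hcard⟩ := exists_zeroSum_card_eq_mul_of_le_card (a := a) (M := M \ T)
    (by rw [card_sdiff_of_subset hT]; omega)
  exact ⟨S, hS.trans sdiff_subset, disjoint_of_subset_right hS disjoint_sdiff, hsum, hcard⟩

lemma zeroSumSubsets_eq_empty_of_three_mul_eq_empty {M : Finset ι} (hM : 6 * p - 3 ≤ #M)
    (h3 : zeroSumSubsets a M (3 * p) = ∅) : zeroSumSubsets a M p = ∅ := by
  rw [zeroSumSubsets_eq_empty_iff] at h3 ⊢
  have hunion : ∀ S ⊆ M, ∀ T ⊆ M, Disjoint S T → ∑ i ∈ S, a i = 0 → ∑ i ∈ T, a i = 0 →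
      #S + #T ≠ 3 * p := fun S hS T hT hST hsumS hsumT hcard =>
    h3 (S ∪ T) (union_subset hS hT) (by rw [sum_union hST, hsumS, hsumT, add_zero])
      (by rw [card_union_of_disjoint hST, hcard])
  intro S₁ hS₁ hsum₁ hcard₁
  obtain ⟨S₂, hS₂, hd₁₂, hsum₂, hcard₂ | hcard₂ | hcard₂⟩ :=
    exists_zeroSum_disjoint_card_eq_mul (a := a) hS₁ (by omega)
  · have hsum₁₂ : ∑ i ∈ S₁ ∪ S₂, a i = 0 := by rw [sum_union hd₁₂, hsum₁, hsum₂, add_zero]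
    have hcard₁₂ : #(S₁ ∪ S₂) = 2 * p := by rw [card_union_of_disjoint hd₁₂]; omega
    obtain ⟨S₃, hS₃, hd, hsum₃, hcard₃ | hcard₃ | hcard₃⟩ :=
      exists_zeroSum_disjoint_card_eq_mul (a := a) (union_subset hS₁ hS₂) (by omega)
    · exact hunion _ (union_subset hS₁ hS₂) S₃ hS₃ hd hsum₁₂ hsum₃ (by omega)
    · exact hunion S₁ hS₁ S₃ hS₃ (disjoint_of_subset_left subset_union_left hd) hsum₁ hsum₃
        (by omega)
    · exact h3 S₃ hS₃ hsum₃ hcard₃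
  · exact hunion S₁ hS₁ S₂ hS₂ hd₁₂ hsum₁ hsum₂ (by omega)
  · exact h3 S₂ hS₂ hsum₂ hcard₂

lemma exists_zeroSum_card_eq_four_mul {M : Finset ι} (hp2 : p ≠ 2) (hM : #M = 5 * p - 3)
    (h1 : zeroSumSubsets a M p = ∅) (h3 : zeroSumSubsets a M (3 * p) = ∅) :
    (zeroSumSubsets a M (4 * p)).Nonempty := by
  have hp := (Fact.out : p.Prime).two_le
  rw [nonempty_iff_ne_empty]
  intro h4
  rw [zeroSumSubsets_eq_empty_iff] at h1 h3 h4
  have hks : ∀ S ⊆ M, ∑ i ∈ S, a i = 0 → p ∣ #S → ∃ k ∈ ({0, 2} : Finset ℕ), #S = p * k := by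
    rintro S hS hsum ⟨k, hk⟩
    have : k < 5 := Nat.lt_of_mul_lt_mul_left (a := p) (by have := card_le_card hS; omega)
    have := h1 S hS hsum
    have := h3 S hS hsum
    have := h4 S hS hsum
    interval_cases k <;> simp_all <;> omega
  have e₀ := sum_card_zeroSumSubsets_mul_choose_eq_zero a M 0 _ hks (by simp; omega)
  have e₁ := sum_card_zeroSumSubsets_mul_choose_eq_zero a M 1 _ hks (by simp; omega)
  -- with `A` zero-sum subsets of size `2p`: `1 + A = 0` and `2A = 0`
  simp [zeroSumSubsets_zero, -mul_eq_zero] at e₀ e₁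
  exact hp2 (eq_two_of_two_pow_eq_zero (n := 1) (by linear_combination 2 * e₀ - e₁))

lemma eq_two_of_zeroSum_card_eq_six_mul {V : Finset ι} (hsum : ∑ i ∈ V, a i = 0)
    (hV : #V = 6 * p) (h1 : zeroSumSubsets a V p = ∅) (h3 : zeroSumSubsets a V (3 * p) = ∅) :
    p = 2 := by
  have hp := (Fact.out : p.Prime).two_le
  rw [zeroSumSubsets_eq_empty_iff] at h1 h3
  have h5 : ∀ S ⊆ V, ∑ i ∈ S, a i = 0 → #S ≠ 5 * p := fun S hS hsumS hcard =>
    h1 (V \ S) sdiff_subset (by rw [sum_sdiff_eq_sub hS, hsum, hsumS, sub_zero])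
      (by rw [card_sdiff_of_subset hS]; omega)
  have hks : ∀ S ⊆ V, ∑ i ∈ S, a i = 0 → p ∣ #S →
      ∃ k ∈ ({0, 2, 4, 6} : Finset ℕ), #S = p * k := by
    rintro S hS hsumS ⟨k, hk⟩
    have : k < 7 := Nat.lt_of_mul_lt_mul_left (a := p) (by have := card_le_card hS; omega)
    have := h1 S hS hsumS
    have := h3 S hS hsumS
    have := h5 S hS hsumS
    interval_cases k <;> simp_all <;> omega
  have htop : zeroSumSubsets a V (p * 6) = {V} := by
    rw [show p * 6 = #V by omega]
    exact zeroSumSubsets_card_self hsum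
  have e₀ := sum_card_zeroSumSubsets_mul_choose_eq_zero a V 0 _ hks (by simp; omega)
  have e₁ := sum_card_zeroSumSubsets_mul_choose_eq_zero a V 1 _ hks (by simp; omega)
  have e₂ := sum_card_zeroSumSubsets_mul_choose_eq_zero a V 2 _ hks (by simp; omega)
  have hev : ∀ k, Even k → (-1 : ZMod p) ^ (p * k) = 1 := fun k hk => (hk.mul_left p).neg_one_pow
  -- with `A`, `B` zero-sum subsets of sizes `2p`, `4p`:
  -- `2 + A + B = 0`, `6 + 2A + 4B = 0`, `15 + A + 6B = 0`
  simp [zeroSumSubsets_zero, htop, hev 4 (by decide), hev 6 (by decide), Nat.choose_two_right,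
    -mul_eq_zero] at e₀ e₁ e₂
  exact eq_two_of_two_pow_eq_zero (n := 4) (by linear_combination 8 * e₀ - 5 * e₁ + 2 * e₂)

theorem exists_zeroSum_card_eq_three_mul (a : ι → Fin 3 → ZMod p) (M : Finset ι)
    (hM : #M = 7 * p - 3) : (zeroSumSubsets a M (3 * p)).Nonempty := by
  have hp := (Fact.out : p.Prime).two_le
  rw [nonempty_iff_ne_empty]
  intro h3
  have h1 := zeroSumSubsets_eq_empty_of_three_mul_eq_empty (by omega) h3
  rcases eq_or_ne p 2 with rfl | hp2
  · have := card_le_two_pow_of_zeroSumSubsets_two_eq_empty h1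
    simp only [Fintype.card_fin] at this
    omega
  obtain ⟨T, hTM, hsumT, hcardT | hcardT | hcardT⟩ :=
    exists_zeroSum_card_eq_mul_of_le_card (a := a) (M := M) (by omega)
  · exact (zeroSumSubsets_eq_empty_iff.mp h1) T hTM hsumT hcardT
  · obtain ⟨W, hW⟩ := exists_zeroSum_card_eq_four_mul (M := M \ T) hp2
      (by rw [card_sdiff_of_subset hTM]; omega)
      (zeroSumSubsets_eq_empty_of_subset sdiff_subset h1)
      (zeroSumSubsets_eq_empty_of_subset sdiff_subset h3)
    obtain ⟨hWM, hsumW, hcardW⟩ := mem_zeroSumSubsets.mp hW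
    have hTW : Disjoint T W := disjoint_of_subset_right hWM disjoint_sdiff
    have hTWM : T ∪ W ⊆ M := union_subset hTM (hWM.trans sdiff_subset)
    refine hp2 (eq_two_of_zeroSum_card_eq_six_mul (V := T ∪ W) ?_ ?_
      (zeroSumSubsets_eq_empty_of_subset hTWM h1) (zeroSumSubsets_eq_empty_of_subset hTWM h3))
    · rw [sum_union hTW, hsumT, hsumW, add_zero]
    · rw [card_union_of_disjoint hTW]; omega
  · exact (zeroSumSubsets_eq_empty_iff.mp h3) T hTM hsumT hcardT

end ThreeDimensional

theorem stmt_1 (p : ℕ) (hp : p.Prime) (J : Multiset (Fin 3 → ZMod p))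
    (hJ : Multiset.card J = 7 * p - 3) :
    ∃ T ≤ J, Multiset.card T = 3 * p ∧ T.sum = 0 := by
  classical
  have : Fact p.Prime := ⟨hp⟩
  let a : J → Fin 3 → ZMod p := fun x => x
  obtain ⟨S, hS⟩ := exists_zeroSum_card_eq_three_mul a univ
    (by rw [card_univ, Multiset.card_coe, hJ])
  obtain ⟨-, hsum, hcard⟩ := mem_zeroSumSubsets.mp hS
  refine ⟨S.val.map a, ?_, by rw [Multiset.card_map, card_val, hcard], by rw [sum_map_val, hsum]⟩
  calc S.val.map a ≤ (univ : Finset J).val.map a :=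
        Multiset.map_le_map (val_le_iff.mpr (subset_univ S))
    _ = J := Multiset.map_univ_coe J
end

section
/- For every prime p and every multiset I of elements of (ZMod p)^3 with |I| = 8p - 3, there exists a sub-multiset of I of cardinality 4p whose sum is 0. -/
/-!
In the group algebra `𝔽_p[(ℤ/p)^k]` the augmentation ideal is generated by `k` elements whose
`p`-th powers vanish, so a product of more than `k(p-1)` factors `1 - X^g` is zero. Reading off the
coefficient of `X^0`, the zero-sum subfamilies of a family of more than `k(p-1)` vectors have
signed count `0` in `𝔽_p`; appending a coordinate `1` to every vector restricts this to zero-sums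
whose size is divisible by `p`.

Let `5p-3` vectors of `(ℤ/p)^3` have no zero-sum of size `p` or `2p`. Then every nonempty zero-sum
of size divisible by `p` has size `3p`, so after deleting at most `p` of the vectors the number of
zero-sums of size `3p` is `1` in `𝔽_p`. Double counting over the deleted `p`-sets gives
`C(5p-3, p) ≡ C(2p-3, p) (mod p)`, which Lucas' theorem only allows for `p = 3`; and for `p = 3`
the complement of every triple is a zero-sum, so all vectors are equal and any three of them form
a zero-sum of size `p`. Hence `5p-3` vectors contain a zero-sum of size `p` or `2p`, `6p-3` vectors
one of size `2p`, and `8p-3` vectors two disjoint ones.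
-/

open Finset

theorem prod_eq_zero_of_mem_span_of_pow_eq_zero {R ι κ : Type*} [CommSemiring R] [Fintype ι]
    [Fintype κ] {t : ι → R} {m : ℕ} (ht : ∀ i, t i ^ (m + 1) = 0)
    (hκ : Fintype.card ι * m < Fintype.card κ) {x : κ → R}
    (hx : ∀ j, x j ∈ Ideal.span (Set.range t)) : ∏ j, x j = 0 := by
  classical
  choose c hc using fun j => Ideal.mem_span_range_iff_exists_fun.mp (hx j)
  simp_rw [← hc, prod_univ_sum, Fintype.piFinset_univ]
  refine sum_eq_zero fun σ _ => ?_
  -- some generator occurs more than `m` times in the monomial indexed by `σ`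
  obtain ⟨i, hi⟩ := Fintype.exists_lt_card_fiber_of_mul_lt_card σ hκ
  obtain ⟨j, hj⟩ := card_pos.mp (m.zero_le.trans_lt hi)
  rw [prod_mul_distrib, prod_comp t σ]
  refine mul_eq_zero_of_right _ (prod_eq_zero (mem_image_of_mem σ (mem_univ j)) ?_)
  rw [(mem_filter.mp hj).2]
  exact pow_eq_zero_of_le hi (ht i)

theorem sum_vecCons_one {ι R : Type*} [AddCommMonoidWithOne R] {k : ℕ} (s : Finset ι)
    (v : ι → Fin k → R) :
    ∑ i ∈ s, Matrix.vecCons (1 : R) (v i) = Matrix.vecCons (#s : R) (∑ i ∈ s, v i) := by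
  ext j
  refine Fin.cases ?_ (fun j => ?_) j <;> simp [Finset.sum_apply]

theorem sum_card_filter_subset_compl {ι : Type*} [Fintype ι] [DecidableEq ι]
    (𝒜 : Finset (Finset ι)) {m : ℕ} (h𝒜 : ∀ t ∈ 𝒜, #t = m) (j : ℕ) :
    ∑ E ∈ powersetCard j univ, #{t ∈ 𝒜 | t ⊆ Eᶜ} = #𝒜 * (Fintype.card ι - m).choose j := by
  simp_rw [card_filter]
  rw [sum_comm, ← smul_eq_mul, ← sum_const]
  refine sum_congr rfl fun t ht => ?_
  rw [← card_filter, ← h𝒜 t ht, ← card_compl, ← card_powersetCard]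
  congr 1
  ext E
  simp [mem_powersetCard, subset_compl_comm, and_comm]

theorem apply_eq_of_forall_card_sum_eq {ι M : Type*} [Fintype ι] [DecidableEq ι]
    [AddCancelCommMonoid M] (v : ι → M) {m : ℕ} (hm : m + 2 ≤ Fintype.card ι) {c : M}
    (h : ∀ E : Finset ι, #E = m + 1 → ∑ i ∈ E, v i = c) (z w : ι) : v z = v w := by
  obtain rfl | hzw := eq_or_ne z w
  · rfl
  obtain ⟨D, hD, hDcard⟩ := exists_subset_card_eq (s := {z, w}ᶜ) (n := m) (by
    rw [card_compl, card_pair hzw]; omega)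
  have hz : z ∉ D := fun hzD => by simpa using hD hzD
  have hw : w ∉ D := fun hwD => by simpa using hD hwD
  have hzD := h (insert z D) (by rw [card_insert_of_notMem hz, hDcard])
  have hwD := h (insert w D) (by rw [card_insert_of_notMem hw, hDcard])
  rw [sum_insert hz] at hzD
  rw [sum_insert hw] at hwD
  exact add_right_cancel (hzD.trans hwD.symm)

theorem cast_choose_mul_add_self (p a r : ℕ) [Fact p.Prime] (hr : r < p) :
    ((a * p + r).choose p : ZMod p) = a := by
  have := Choose.choose_modEq_choose_mod_mul_choose_div_nat (n := a * p + r) (k := p) (p := p)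
  have hp := (Fact.out : p.Prime).pos
  have hdiv : (a * p + r) / p = a := by
    rw [Nat.add_comm, Nat.add_mul_div_right _ _ hp, Nat.div_eq_of_lt hr, zero_add]
  rw [(ZMod.natCast_eq_natCast_iff _ _ _).mpr this, Nat.mul_add_mod_of_lt hr, Nat.mod_self, hdiv,
    Nat.div_self hp]
  simp

theorem cast_choose_five_mul_sub_three (p : ℕ) [hp : Fact p.Prime] :
    ((5 * p - 3).choose p : ZMod p) = (2 * p - 3).choose p + 3 := by
  obtain rfl | hp2 := eq_or_ne p 2
  · rfl
  have h3 : 3 ≤ p := hp.out.two_le.lt_of_ne' hp2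
  rw [show 5 * p - 3 = 4 * p + (p - 3) by omega, show 2 * p - 3 = 1 * p + (p - 3) by omega,
    cast_choose_mul_add_self p 4 _ (by omega), cast_choose_mul_add_self p 1 _ (by omega)]
  norm_num

theorem Multiset.exists_le_card_eq {α : Type*} {s : Multiset α} {n : ℕ}
    (h : n ≤ Multiset.card s) : ∃ t ≤ s, Multiset.card t = n := by
  obtain ⟨t, ht⟩ := Multiset.card_pos_iff_exists_mem.mp
    ((Multiset.card_powersetCard n s).symm ▸ Nat.choose_pos h)
  exact ⟨t, Multiset.mem_powersetCard.mp ht⟩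

namespace ZeroSum

section GroupAlgebra

variable {p k : ℕ} [hp : Fact p.Prime]

local notation "A" => AddMonoidAlgebra (ZMod p) (Fin k → ZMod p)

open AddMonoidAlgebra

theorem one_sub_single_pow_char (g : Fin k → ZMod p) : (1 - single g 1 : A) ^ p = 0 := by
  have : CharP A p := charP_of_injective_algebraMap' (ZMod p) p
  rw [sub_pow_char, one_pow, single_pow, ZModModule.char_nsmul_eq_zero, one_pow, one_def, sub_self]

theorem one_sub_single_mem_span (g : Fin k → ZMod p) :
    (1 - single g 1 : A) ∈ Ideal.span (Set.range fun i => 1 - single (Pi.single i 1) 1) := by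
  induction g using Pi.single_induction with
  | zero => simp [← one_def]
  | add f g hf hg =>
    have : (1 - single (f + g) 1 : A) = (1 - single f 1) + single f 1 * (1 - single g 1) := by
      rw [mul_sub, single_mul_single, mul_one, one_mul]; ring
    rw [this]
    exact add_mem hf (Ideal.mul_mem_left _ _ hg)
  | single i a =>
    have : (1 - single (Pi.single i a) 1 : A) =
        (∑ j ∈ range a.val, single (Pi.single i 1) 1 ^ j) * (1 - single (Pi.single i 1) 1) := by
      rw [geom_sum_mul_neg, single_pow, one_pow, ← Pi.single_smul, nsmul_eq_mul, mul_one,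
        ZMod.natCast_zmod_val]
    rw [this]
    exact Ideal.mul_mem_left _ _ (Ideal.subset_span ⟨i, rfl⟩)

theorem prod_one_sub_single_eq_zero {ι : Type*} (s : Finset ι) (v : ι → Fin k → ZMod p)
    (hs : k * (p - 1) < #s) : ∏ i ∈ s, (1 - single (v i) 1 : A) = 0 := by
  rw [← prod_coe_sort]
  refine prod_eq_zero_of_mem_span_of_pow_eq_zero (m := p - 1) (fun i => ?_) (by simpa using hs)
    fun j => one_sub_single_mem_span (v j)
  rw [Nat.sub_add_cancel hp.out.one_le]
  exact one_sub_single_pow_char _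

theorem sum_neg_one_pow_card_of_sum_eq_zero {ι : Type*} [DecidableEq ι]
    (v : ι → Fin k → ZMod p) (s : Finset ι) (hs : k * (p - 1) < #s) :
    ∑ t ∈ s.powerset with ∑ i ∈ t, v i = 0, (-1 : ZMod p) ^ #t = 0 := by
  have expand : ∏ i ∈ s, (1 - single (v i) 1 : A) =
      ∑ t ∈ s.powerset, single (∑ i ∈ t, v i) ((-1 : ZMod p) ^ #t) := by
    simp_rw [sub_eq_neg_add, ← single_neg, prod_add, prod_const_one, mul_one, prod_single,
      prod_const]
  have := congrArg (fun x : A => x.coeff 0)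
    ((prod_one_sub_single_eq_zero s v hs).symm.trans expand)
  simpa [coeff_sum, Finsupp.single_apply, sum_filter, eq_comm] using this.symm

end GroupAlgebra

section CardDivisible

variable {p k : ℕ} [hp : Fact p.Prime] {ι : Type*} [DecidableEq ι]

theorem sum_neg_one_pow_card_of_card_eq_zero_of_sum_eq_zero (v : ι → Fin k → ZMod p)
    (s : Finset ι) (hs : (k + 1) * (p - 1) < #s) :
    ∑ t ∈ s.powerset with (#t : ZMod p) = 0 ∧ ∑ i ∈ t, v i = 0, (-1 : ZMod p) ^ #t = 0 := by
  simpa only [sum_vecCons_one, Matrix.cons_eq_zero_iff] using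
    sum_neg_one_pow_card_of_sum_eq_zero (fun i => Matrix.vecCons 1 (v i)) s hs

theorem exists_nonempty_sum_eq_zero_dvd_card (v : ι → Fin k → ZMod p) (s : Finset ι)
    (hs : (k + 1) * (p - 1) < #s) :
    ∃ t ⊆ s, t.Nonempty ∧ ∑ i ∈ t, v i = 0 ∧ p ∣ #t := by
  by_contra! h
  have hfilter : {t ∈ s.powerset | (#t : ZMod p) = 0 ∧ ∑ i ∈ t, v i = 0} = {∅} := by
    ext t
    simp only [mem_filter, mem_powerset, mem_singleton, ZMod.natCast_eq_zero_iff]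
    refine ⟨fun ⟨hts, hdvd, h0⟩ => not_nonempty_iff_eq_empty.mp fun hne => h t hts hne h0 hdvd,
      ?_⟩
    rintro rfl
    simp
  have := sum_neg_one_pow_card_of_card_eq_zero_of_sum_eq_zero v s hs
  rw [hfilter, sum_singleton, card_empty, pow_zero] at this
  exact one_ne_zero this

theorem cast_card_filter_card_eq_three_mul (v : ι → Fin k → ZMod p) (s : Finset ι)
    (hs : (k + 1) * (p - 1) < #s)
    (hcard : ∀ t ⊆ s, t.Nonempty → ∑ i ∈ t, v i = 0 → p ∣ #t → #t = 3 * p) :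
    (#{t ∈ s.powerset | ∑ i ∈ t, v i = 0 ∧ #t = 3 * p} : ZMod p) = 1 := by
  have hfilter : {t ∈ s.powerset | (#t : ZMod p) = 0 ∧ ∑ i ∈ t, v i = 0} =
      insert ∅ {t ∈ s.powerset | ∑ i ∈ t, v i = 0 ∧ #t = 3 * p} := by
    ext t
    simp only [mem_filter, mem_powerset, mem_insert, ZMod.natCast_eq_zero_iff]
    constructor
    · rintro ⟨hts, hdvd, h0⟩
      rcases t.eq_empty_or_nonempty with rfl | hne
      · exact Or.inl rfl
      · exact Or.inr ⟨hts, h0, hcard t hts hne h0 hdvd⟩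
    · rintro (rfl | ⟨hts, h0, h3⟩)
      · simp
      · exact ⟨hts, h3 ▸ dvd_mul_left p 3, h0⟩
  have hempty : ∅ ∉ {t ∈ s.powerset | ∑ i ∈ t, v i = 0 ∧ #t = 3 * p} := by
    simp [hp.out.pos.ne']
  have := sum_neg_one_pow_card_of_card_eq_zero_of_sum_eq_zero v s hs
  rw [hfilter, sum_insert hempty, card_empty, pow_zero,
    sum_congr rfl fun t ht => by rw [(mem_filter.mp ht).2.2], sum_const, pow_mul',
    neg_one_pow_char, nsmul_eq_mul] at this
  linear_combination -this

end CardDivisible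

section NoZeroSumOfCardPOrTwoP

def NoZeroSumOfCard {ι G : Type*} [AddCommMonoid G] (v : ι → G) (n : ℕ) : Prop :=
  ∀ t : Finset ι, ∑ i ∈ t, v i = 0 → #t ≠ n

variable {p : ℕ} [hp : Fact p.Prime] {ι : Type*} [DecidableEq ι] {v : ι → Fin 3 → ZMod p}

theorem card_ne_four_mul (h₁ : NoZeroSumOfCard v p) (h₂ : NoZeroSumOfCard v (2 * p))
    (t : Finset ι) (ht : ∑ i ∈ t, v i = 0) : #t ≠ 4 * p := by
  intro h4
  have := hp.out.two_le
  obtain ⟨W, hWt, hW⟩ := exists_subset_card_eq (s := t) (n := 4 * p - 3) (by omega)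
  obtain ⟨u, huW, hne, hu, j, hj⟩ := exists_nonempty_sum_eq_zero_dvd_card v W (by omega)
  have hu_le : #u ≤ 4 * p - 3 := hW ▸ card_le_card huW
  have hj4 : j < 4 := Nat.lt_of_mul_lt_mul_left (show p * j < p * 4 by omega)
  interval_cases j
  · exact hne.card_pos.ne' (by omega)
  · exact h₁ u hu (by omega)
  · exact h₂ u hu (by omega)
  · refine h₁ (t \ u) (by rw [sum_sdiff_eq_sub (huW.trans hWt), ht, hu, sub_zero]) ?_
    rw [card_sdiff_of_subset (huW.trans hWt)]
    omega

variable [Fintype ι]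

theorem card_eq_three_mul (h₁ : NoZeroSumOfCard v p) (h₂ : NoZeroSumOfCard v (2 * p))
    (hι : Fintype.card ι = 5 * p - 3) (t : Finset ι) (hne : t.Nonempty) (ht : ∑ i ∈ t, v i = 0)
    (hdvd : p ∣ #t) : #t = 3 * p := by
  obtain ⟨j, hj⟩ := hdvd
  have := hp.out.two_le
  have ht_le : #t ≤ 5 * p - 3 := hι ▸ card_le_univ t
  have hj5 : j < 5 := Nat.lt_of_mul_lt_mul_left (show p * j < p * 5 by omega)
  interval_cases j
  · exact absurd hj (hne.card_pos.ne'.trans_eq (mul_zero p).symm)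
  · exact absurd (hj.trans (mul_one p)) (h₁ t ht)
  · exact absurd (hj.trans (mul_comm p 2)) (h₂ t ht)
  · exact hj.trans (mul_comm p 3)
  · exact absurd (hj.trans (mul_comm p 4)) (card_ne_four_mul h₁ h₂ t ht)

theorem cast_card_zero_sum_subset_compl (h₁ : NoZeroSumOfCard v p) (h₂ : NoZeroSumOfCard v (2 * p))
    (hι : Fintype.card ι = 5 * p - 3) (E : Finset ι) (hE : #E ≤ p) :
    (#{t ∈ Eᶜ.powerset | ∑ i ∈ t, v i = 0 ∧ #t = 3 * p} : ZMod p) = 1 :=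
  cast_card_filter_card_eq_three_mul v Eᶜ (by have := hp.out.two_le; rw [card_compl]; omega)
    fun t _ => card_eq_three_mul h₁ h₂ hι t

theorem prime_eq_three (h₁ : NoZeroSumOfCard v p) (h₂ : NoZeroSumOfCard v (2 * p))
    (hι : Fintype.card ι = 5 * p - 3) : p = 3 := by
  set 𝒜 : Finset (Finset ι) := {t | ∑ i ∈ t, v i = 0 ∧ #t = 3 * p}
  have h𝒜 : (#𝒜 : ZMod p) = 1 := by
    simpa [𝒜] using cast_card_zero_sum_subset_compl h₁ h₂ hι ∅ (Nat.zero_le p)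
  have hE : ∀ E ∈ powersetCard p univ, (#{t ∈ 𝒜 | t ⊆ Eᶜ} : ZMod p) = 1 := by
    intro E hE
    rw [← cast_card_zero_sum_subset_compl h₁ h₂ hι E (mem_powersetCard.mp hE).2.le]
    congr 2
    ext t
    simp [𝒜, and_comm]
  have hcount := congrArg (Nat.cast : ℕ → ZMod p)
    (sum_card_filter_subset_compl 𝒜 (fun t ht => (mem_filter.mp ht).2.2) p)
  rw [Nat.cast_sum, sum_congr rfl hE, sum_const, card_powersetCard, card_univ, hι,
    show 5 * p - 3 - 3 * p = 2 * p - 3 by omega, Nat.cast_mul, h𝒜, one_mul, nsmul_one,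
    cast_choose_five_mul_sub_three] at hcount
  have h3 : ((3 : ℕ) : ZMod p) = 0 := by push_cast; linear_combination hcount
  exact (Nat.prime_dvd_prime_iff_eq hp.out Nat.prime_three).mp
    ((ZMod.natCast_eq_zero_iff _ _).mp h3)

theorem prime_ne_three (h₁ : NoZeroSumOfCard v p) (h₂ : NoZeroSumOfCard v (2 * p))
    (hι : Fintype.card ι = 5 * p - 3) : p ≠ 3 := by
  rintro rfl
  -- the complement of a triple has exactly `9 = 3p` elements, so it is itself the zero-sum
  have hsum : ∀ E : Finset ι, #E = 3 → ∑ i ∈ E, v i = ∑ i, v i := by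
    intro E hE
    obtain ⟨t, ht⟩ : {t ∈ Eᶜ.powerset | ∑ i ∈ t, v i = 0 ∧ #t = 3 * 3}.Nonempty := by
      rw [nonempty_iff_ne_empty]
      intro h
      simpa [h] using cast_card_zero_sum_subset_compl h₁ h₂ hι E hE.le
    obtain ⟨htE, ht0, ht9⟩ := by simpa only [mem_filter, mem_powerset] using ht
    obtain rfl : t = Eᶜ := eq_of_subset_of_card_le htE (by rw [card_compl]; omega)
    rw [← sum_compl_add_sum E v, ht0, zero_add]
  have hconst := apply_eq_of_forall_card_sum_eq v (m := 2) (by omega) hsum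
  obtain ⟨E, -, hE⟩ :=
    exists_subset_card_eq (s := (univ : Finset ι)) (n := 3) (by rw [card_univ]; omega)
  obtain ⟨z, -⟩ := card_pos.mp (hE ▸ three_pos : 0 < #E)
  refine h₁ E ?_ hE
  rw [sum_congr rfl fun i _ => hconst i z, sum_const, hE, ZModModule.char_nsmul_eq_zero]

theorem exists_sum_eq_zero_card_eq_or_eq_two_mul (v : ι → Fin 3 → ZMod p)
    (hι : Fintype.card ι = 5 * p - 3) :
    ∃ t : Finset ι, ∑ i ∈ t, v i = 0 ∧ (#t = p ∨ #t = 2 * p) := by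
  by_contra! h
  have h₁ : NoZeroSumOfCard v p := fun t ht => (h t ht).1
  have h₂ : NoZeroSumOfCard v (2 * p) := fun t ht => (h t ht).2
  exact prime_ne_three h₁ h₂ hι (prime_eq_three h₁ h₂ hι)

end NoZeroSumOfCardPOrTwoP

section Multiset

variable {p : ℕ} [Fact p.Prime]

theorem exists_le_sum_eq_zero_card_eq_or_eq_two_mul (J : Multiset (Fin 3 → ZMod p))
    (hJ : 5 * p - 3 ≤ Multiset.card J) :
    ∃ T ≤ J, T.sum = 0 ∧ (Multiset.card T = p ∨ Multiset.card T = 2 * p) := by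
  classical
  obtain ⟨J', hJ'J, hJ'⟩ := Multiset.exists_le_card_eq hJ
  let v : J' → Fin 3 → ZMod p := (↑)
  obtain ⟨t, ht0, ht⟩ := exists_sum_eq_zero_card_eq_or_eq_two_mul v
    (by rw [Multiset.card_coe, hJ'])
  refine ⟨t.val.map v, ?_, by rwa [sum_map_val], by rwa [Multiset.card_map]⟩
  calc t.val.map v ≤ (univ : Finset J').val.map v :=
        Multiset.map_le_map (val_le_iff.mpr (subset_univ t))
    _ = J' := Multiset.map_univ_coe J'
    _ ≤ J := hJ'J

theorem exists_le_sum_eq_zero_card_eq_two_mul (J : Multiset (Fin 3 → ZMod p))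
    (hJ : 6 * p - 3 ≤ Multiset.card J) : ∃ T ≤ J, T.sum = 0 ∧ Multiset.card T = 2 * p := by
  obtain ⟨T, hTJ, hT0, hT | hT⟩ := exists_le_sum_eq_zero_card_eq_or_eq_two_mul J (by omega)
  · obtain ⟨T', hT'J, hT'0, hT' | hT'⟩ := exists_le_sum_eq_zero_card_eq_or_eq_two_mul (J - T)
      (by rw [Multiset.card_sub hTJ]; omega)
    · exact ⟨T + T', (le_tsub_iff_left hTJ).mp hT'J, by simp [hT0, hT'0], by simp [hT, hT']; ring⟩
    · exact ⟨T', hT'J.trans (Multiset.sub_le_self J T), hT'0, hT'⟩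
  · exact ⟨T, hTJ, hT0, hT⟩

end Multiset

end ZeroSum

theorem stmt_2 (p : ℕ) (hp : p.Prime) (I : Multiset (Fin 3 → ZMod p))
    (hI : Multiset.card I = 8 * p - 3) :
    ∃ T ≤ I, Multiset.card T = 4 * p ∧ T.sum = 0 := by
  have : Fact p.Prime := ⟨hp⟩
  have := hp.two_le
  obtain ⟨T, hTI, hT0, hT⟩ := ZeroSum.exists_le_sum_eq_zero_card_eq_two_mul I (by omega)
  obtain ⟨T', hT'I, hT'0, hT'⟩ :=
    ZeroSum.exists_le_sum_eq_zero_card_eq_two_mul (I - T) (by rw [Multiset.card_sub hTI]; omega)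
  exact ⟨T + T', (le_tsub_iff_left hTI).mp hT'I, by simp [hT, hT']; ring, by simp [hT0, hT'0]⟩
end

section
/- For every prime p and every multiset J of elements of (ZMod p)^3 with |J| = 5p, if the sum of J is 0 then J contains a zero-sum sub-multiset of cardinality p or a zero-sum sub-multiset of cardinality 2p. -/
open MvPolynomial Finset

/-- Chevalley–Warning step: a list of more than `4(p-1)` vectors in `(ZMod p)^3`
contains a nonempty index set of size divisible by `p` whose elements sum to zero. -/
lemma cw_step (p : ℕ) (hp : p.Prime) (L : List (Fin 3 → ZMod p))
    (hL : 4 * (p - 1) < L.length) :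
    ∃ S : Finset (Fin L.length), S.Nonempty ∧ p ∣ S.card ∧
      (∑ i ∈ S, L.get i) = 0 := by
  haveI : Fact p.Prime := ⟨hp⟩
  set m := L.length with hm
  set a : Fin m → (Fin 3 → ZMod p) := L.get with ha
  let c : Fin 4 → Fin m → ZMod p := fun j i =>
    if h : (j : ℕ) < 3 then a i ⟨j, h⟩ else 1
  let f : Fin 4 → MvPolynomial (Fin m) (ZMod p) :=
    fun j => ∑ i : Fin m, C (c j i) * X i ^ (p - 1)
  have hp1 : 0 < p - 1 := by have := hp.two_le; omega
  have hdeg : ∀ j, (f j).totalDegree ≤ p - 1 := by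
    intro j
    refine (totalDegree_finset_sum _ _).trans (Finset.sup_le fun i _ => ?_)
    calc (C (c j i) * X i ^ (p-1)).totalDegree
        ≤ (C (c j i)).totalDegree + (X (R := ZMod p) i ^ (p-1)).totalDegree :=
          totalDegree_mul _ _
      _ ≤ p - 1 := by
          rw [totalDegree_C, zero_add]
          simp [totalDegree_pow (X (R := ZMod p) i) (p-1)]

  have hsumdeg : ∑ j : Fin 4, (f j).totalDegree < Fintype.card (Fin m) := by
    calc ∑ j : Fin 4, (f j).totalDegree ≤ ∑ _j : Fin 4, (p-1) :=
          Finset.sum_le_sum fun j _ => hdeg j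
      _ = 4 * (p - 1) := by simp [mul_comm]
      _ < m := hL
      _ = Fintype.card (Fin m) := by simp
  have hdvd := char_dvd_card_solutions_of_fintype_sum_lt (K := ZMod p) (σ := Fin m)
    (f := f) p hsumdeg
  have heval : ∀ x : Fin m → ZMod p, ∀ j, eval x (f j) = ∑ i : Fin m, c j i * x i ^ (p-1) := by
    intro x j
    simp [f, eval_sum]
  have h0 : ∀ j, eval (0 : Fin m → ZMod p) (f j) = 0 := by
    intro j
    rw [heval]
    simp [zero_pow hp1.ne']
  -- there is a nonzero solution
  have hdvd' : p ∣ Fintype.card { x : Fin m → ZMod p // ∀ j, eval x (f j) = 0 } := by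
    convert hdvd
  have hcard : 1 < Fintype.card { x : Fin m → ZMod p // ∀ j, eval x (f j) = 0 } := by
    have hpos : 0 < Fintype.card { x : Fin m → ZMod p // ∀ j, eval x (f j) = 0 } :=
      Fintype.card_pos_iff.mpr ⟨⟨0, h0⟩⟩
    have := Nat.le_of_dvd hpos hdvd'
    have := hp.two_le
    omega
  obtain ⟨y, hy⟩ := Fintype.exists_ne_of_one_lt_card hcard ⟨0, h0⟩
  have hx0 : y.1 ≠ 0 := fun h => hy (Subtype.ext h)
  set x : Fin m → ZMod p := y.1 with hxdef
  let S : Finset (Fin m) := Finset.univ.filter (fun i => x i ≠ 0)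
  have key : ∀ j : Fin 4, ∑ i ∈ S, c j i = 0 := by
    intro j
    have h1 : ∑ i : Fin m, c j i * x i ^ (p-1) = 0 := by rw [← heval]; exact y.2 j
    have h2 : ∑ i ∈ S, c j i * x i ^ (p-1) = ∑ i : Fin m, c j i * x i ^ (p-1) :=
      Finset.sum_filter_of_ne (by
        intro i _ hne
        intro hxi
        exact hne (by rw [hxi, zero_pow hp1.ne', mul_zero]))
    have h3 : ∑ i ∈ S, c j i * x i ^ (p-1) = ∑ i ∈ S, c j i := by
      refine Finset.sum_congr rfl fun i hi => ?_
      have hxi : x i ≠ 0 := (Finset.mem_filter.mp hi).2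
      rw [ZMod.pow_card_sub_one_eq_one hxi, mul_one]
    rw [← h3, h2, h1]
  refine ⟨S, ?_, ?_, ?_⟩
  · obtain ⟨i, hi⟩ := Function.ne_iff.mp hx0
    exact ⟨i, Finset.mem_filter.mpr ⟨Finset.mem_univ _, hi⟩⟩
  · have hthis := key ⟨3, by omega⟩
    have hc3 : ∀ i, c ⟨3, by omega⟩ i = 1 := fun i => dif_neg (by norm_num)
    rw [Finset.sum_congr rfl fun i _ => hc3 i, Finset.sum_const, nsmul_eq_mul, mul_one]
      at hthis
    exact (ZMod.natCast_eq_zero_iff _ _).mp hthis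
  · funext t
    have hthis := key ⟨t.1, by omega⟩
    have hct : ∀ i, c ⟨t.1, by omega⟩ i = a i t := fun i => dif_pos t.2
    rw [Finset.sum_congr rfl fun i _ => hct i] at hthis
    rw [Finset.sum_apply]
    exact hthis

theorem stmt_4 (p : ℕ) (hp : p.Prime) (J : Multiset (Fin 3 → ZMod p))
    (hJ : Multiset.card J = 5 * p) (hsum : J.sum = 0) :
    (∃ T ≤ J, Multiset.card T = p ∧ T.sum = 0) ∨
      (∃ T ≤ J, Multiset.card T = 2 * p ∧ T.sum = 0) := by
  have hp2 := hp.two_le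
  have hpos : 0 < Multiset.card J := by omega
  obtain ⟨b, hb⟩ := Multiset.card_pos_iff_exists_mem.mp hpos
  set J' := J.erase b with hJ'def
  have hJ'le : J' ≤ J := Multiset.erase_le b J
  have hJ'card : Multiset.card J' = 5 * p - 1 := by
    rw [hJ'def, Multiset.card_erase_of_mem hb, hJ]
    rfl
  set L := J'.toList with hLdef
  have hLlen : L.length = 5 * p - 1 := by
    rw [hLdef, Multiset.length_toList, hJ'card]
  have hL4 : 4 * (p - 1) < L.length := by rw [hLlen]; omega
  obtain ⟨S, hSne, ⟨k, hk⟩, hSsum⟩ := cw_step p hp L hL4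
  set T : Multiset (Fin 3 → ZMod p) := S.val.map L.get with hTdef
  have huniv : Multiset.map L.get (Finset.univ : Finset (Fin L.length)).val = J' := by
    rw [Fin.univ_def]
    show Multiset.map L.get ↑(List.finRange L.length) = J'
    rw [Multiset.map_coe, List.map_get_finRange, hLdef, Multiset.coe_toList]
  have hTJ : T ≤ J := by
    refine le_trans (le_trans ?_ huniv.le) hJ'le
    exact Multiset.map_le_map (Finset.val_le_iff.mpr (Finset.subset_univ S))
  have hTcard : Multiset.card T = p * k := by
    rw [hTdef, Multiset.card_map]; exact hk
  have hTsum : T.sum = 0 := by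
    rw [hTdef, ← Finset.sum_eq_multiset_sum]; exact hSsum
  have hk1 : 1 ≤ k := by
    rcases Nat.eq_zero_or_pos k with h | h
    · exfalso
      subst h
      rw [mul_zero] at hk
      have := hSne.card_pos
      omega
    · exact h
  have hk4 : k ≤ 4 := by
    have h1 : S.card ≤ L.length := by
      have := Finset.card_le_univ S
      simpa using this
    rw [hk, hLlen] at h1
    by_contra h
    have : 5 ≤ k := by omega
    have : p * 5 ≤ p * k := Nat.mul_le_mul_left p this
    omega
  -- complement facts
  have hcompl : ∀ {c : ℕ}, Multiset.card T = c → (J - T) ≤ J ∧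
      Multiset.card (J - T) = 5 * p - c ∧ (J - T).sum = 0 := by
    intro c hc
    refine ⟨tsub_le_self, ?_, ?_⟩
    · rw [Multiset.card_sub hTJ, hJ, hc]
    · have hadd : J - T + T = J := tsub_add_cancel_of_le hTJ
      have := congrArg Multiset.sum hadd
      rw [Multiset.sum_add, hTsum, add_zero, hsum] at this
      exact this
  interval_cases k
  · exact Or.inl ⟨T, hTJ, by rw [hTcard, mul_one], hTsum⟩
  · exact Or.inr ⟨T, hTJ, by rw [hTcard, mul_comm], hTsum⟩
  · obtain ⟨h1, h2, h3⟩ := hcompl hTcard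
    refine Or.inr ⟨J - T, h1, ?_, h3⟩
    rw [h2]; omega
  · obtain ⟨h1, h2, h3⟩ := hcompl hTcard
    refine Or.inl ⟨J - T, h1, ?_, h3⟩
    rw [h2]; omega
end

section
/- For every prime p and every multiset J of elements of (ZMod p)^3 with |J| = 4p, if the sum of J is 0 then J contains a zero-sum sub-multiset of cardinality p or a zero-sum sub-multiset of cardinality 2p. -/
open Finset MvPolynomial

private noncomputable def gpoly {ι : Type*} {p : ℕ} (s : Finset ι)
    (a : ι → Fin 3 → ZMod p) : Option (Fin 3) → MvPolynomial s (ZMod p)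
  | none => ∑ i, X i ^ (p - 1)
  | some c => ∑ i : s, a i c • X i ^ (p - 1)

private lemma gpoly_totalDegree {ι : Type*} {p : ℕ} [Fact p.Prime] (s : Finset ι)
    (a : ι → Fin 3 → ZMod p) (o : Option (Fin 3)) :
    (gpoly s a o).totalDegree ≤ p - 1 := by
  cases o with
  | none =>
      exact totalDegree_finsetSum_le fun i _ ↦ (totalDegree_X_pow ..).le
  | some c =>
      exact totalDegree_finsetSum_le fun i _ ↦
        (totalDegree_smul_le ..).trans (totalDegree_X_pow ..).le

private lemma key {ι : Type*} {p : ℕ} [Fact p.Prime] {s : Finset ι}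
    (a : ι → Fin 3 → ZMod p) (hs : #s = 4 * p - 3) :
    ∃ t ⊆ s, 0 < #t ∧ #t ≤ 4 * p - 3 ∧ p ∣ #t ∧ ∑ i ∈ t, a i = 0 := by
  classical
  have hp1 : 1 < p := (Fact.out : p.Prime).one_lt
  set N := Fintype.card {x // ∀ o, eval x (gpoly s a o) = 0} with hN
  let zero_sol : {x // ∀ o, eval x (gpoly s a o) = 0} :=
    ⟨0, by rintro (_ | c) <;> simp [gpoly, map_sum, hp1, tsub_eq_zero_iff_le]⟩
  have hN₀ : 0 < N := @Fintype.card_pos _ _ ⟨zero_sol⟩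
  have hdeg : (∑ o : Option (Fin 3), (gpoly s a o).totalDegree) < Fintype.card s := by
    calc (∑ o : Option (Fin 3), (gpoly s a o).totalDegree)
        ≤ ∑ _o : Option (Fin 3), (p - 1) :=
          Finset.sum_le_sum fun o _ ↦ gpoly_totalDegree s a o
      _ < Fintype.card s := by
          simp only [Finset.sum_const, Finset.card_univ, Fintype.card_coe, hs,
            Fintype.card_option, Fintype.card_fin, smul_eq_mul]
          omega
  have hpN : p ∣ N := char_dvd_card_solutions_of_fintype_sum_lt p hdeg
  obtain ⟨x, hx⟩ := Fintype.exists_ne_of_one_lt_card (hp1.trans_le <| Nat.le_of_dvd hN₀ hpN)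
    zero_sol
  refine ⟨({i | x.1 i ≠ 0} : Finset _).map ⟨(↑), Subtype.val_injective⟩, ?_, ?_, ?_, ?_, ?_⟩
  · simp +contextual [subset_iff]
  · rw [card_map, Finset.card_pos]
    rw [← Subtype.coe_ne_coe, Function.ne_iff] at hx
    exact hx.imp fun i hi ↦ mem_filter.2 ⟨Finset.mem_attach _ _, hi⟩
  · rw [card_map]
    calc #{i | x.1 i ≠ 0} ≤ #(@Finset.univ s _) := Finset.card_filter_le _ _
      _ = 4 * p - 3 := by rw [univ_eq_attach, card_attach, hs]
  · rw [card_map, ← CharP.cast_eq_zero_iff (ZMod p), ← Finset.sum_boole]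
    simpa only [gpoly, map_sum, ZMod.pow_card_sub_one, map_pow, eval_X] using x.2 none
  · funext c
    have := x.2 (some c)
    simp only [Pi.zero_apply, Finset.sum_apply, Finset.sum_map, Function.Embedding.coeFn_mk]
    simpa [gpoly, ZMod.pow_card_sub_one, Finset.sum_filter] using this

theorem stmt_6 (p : ℕ) (hp : p.Prime) (J : Multiset (Fin 3 → ZMod p))
    (hJ : Multiset.card J = 4 * p) (hsum : J.sum = 0) :
    (∃ T ≤ J, Multiset.card T = p ∧ T.sum = 0) ∨
      (∃ T ≤ J, Multiset.card T = 2 * p ∧ T.sum = 0) := by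
  classical
  haveI := Fact.mk hp
  have hp2 := hp.two_le
  -- pick 4p - 3 elements of the enum finset
  have hcard : Multiset.card J = #J.toEnumFinset := by
    rw [Multiset.card_toEnumFinset]
  obtain ⟨s, hsub, hscard⟩ : ∃ s ⊆ J.toEnumFinset, #s = 4 * p - 3 :=
    Finset.exists_subset_card_eq (by omega)
  obtain ⟨t, hts, htpos, htle, ⟨k, hk⟩, htsum⟩ := key (Prod.fst) hscard
  set T : Multiset (Fin 3 → ZMod p) := t.1.map Prod.fst with hT
  have hTJ : T ≤ J :=
    Multiset.map_fst_le_of_subset_toEnumFinset (hts.trans hsub)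
  have hTcard : Multiset.card T = #t := by simp [hT]
  have hTsum : T.sum = 0 := by
    have : T.sum = ∑ i ∈ t, i.1 := rfl
    rw [this, htsum]
  have hk3 : k < 4 := by
    have h1 : p * k < p * 4 := by
      calc p * k = #t := hk.symm
        _ ≤ 4 * p - 3 := htle
        _ < p * 4 := by omega
    exact lt_of_mul_lt_mul_left h1 (Nat.zero_le p)
  have hk1 : 1 ≤ k := by
    rcases Nat.eq_zero_or_pos k with rfl | h
    · rw [hk, Nat.mul_zero] at htpos; omega
    · exact h
  interval_cases k
  · exact Or.inl ⟨T, hTJ, by omega, hTsum⟩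
  · exact Or.inr ⟨T, hTJ, by rw [hTcard, hk]; ring, hTsum⟩
  · -- complement has size p
    refine Or.inl ⟨J - T, tsub_le_self, ?_, ?_⟩
    · rw [Multiset.card_sub hTJ, hJ, hTcard, hk]; omega
    · have hsplit : (J - T) + T = J := tsub_add_cancel_of_le hTJ
      have := congrArg Multiset.sum hsplit
      rw [Multiset.sum_add, hTsum, add_zero, hsum] at this
      exact this
end

section
/- Let p be a prime and J a multiset over (ZMod p)^3 with |J| = 5p - 3. Let N^k(J) count zero-sum sub-multisets of cardinality k. Then 1 - N^p(J) + N^{2p}(J) - N^{3p}(J) + N^{4p}(J) ≡ 0 (mod p). -/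
/-- Number of zero-sum sub-multisets of `J` of cardinality `k`. -/
def N {p : ℕ} (k : ℕ) (J : Multiset (Fin 3 → ZMod p)) : ℕ :=
  (J.powerset.filter (fun T => Multiset.card T = k ∧ T.sum = 0)).card


lemma powerset_map' {α β : Type*} (f : α → β) (s : Multiset α) :
    (s.map f).powerset = s.powerset.map (Multiset.map f) := by
  induction s using Multiset.induction_on with
  | empty => simp
  | cons a s ih =>
      simp only [Multiset.map_cons, Multiset.powerset_cons, ih, Multiset.map_add,
        Multiset.map_map]
      congr 1
      apply Multiset.map_congr rfl
      intro t _
      simp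

lemma powerset_val {α : Type*} (s : Finset α) :
    s.val.powerset = s.powerset.val.map Finset.val := by
  simp [Finset.powerset, Multiset.map_pmap, Multiset.pmap_eq_map, Multiset.map_id']

lemma N_count {α : Type*} [DecidableEq α] {n : ℕ} (f : Fin n → α)
    (P : Multiset α → Prop) [DecidablePred P] :
    Multiset.card ((Multiset.map f Finset.univ.val).powerset.filter P)
      = (Finset.univ.powerset.filter (fun S : Finset (Fin n) => P (S.val.map f))).card := by
  rw [powerset_map', Multiset.filter_map, Multiset.card_map, powerset_val,
    Multiset.filter_map, Multiset.card_map]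
  rfl
open Finset MvPolynomial

variable {p : ℕ} [Fact p.Prime] {n : ℕ}

-- value of x^(p-1)
lemma pow_sub_one (x : ZMod p) : x ^ (p - 1) = if x ≠ 0 then 1 else 0 := by
  split_ifs with h
  · exact ZMod.pow_card_sub_one_eq_one h
  · push_neg at h
    subst h
    exact zero_pow (Nat.sub_ne_zero_of_lt (Fact.out : p.Prime).one_lt)

-- fiber card
lemma fiber_card (S : Finset (Fin n)) :
    (Finset.univ.filter (fun x : Fin n → ZMod p => ∀ i, x i ≠ 0 ↔ i ∈ S)).card
      = (p - 1) ^ S.card := by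
  have : (Finset.univ.filter (fun x : Fin n → ZMod p => ∀ i, x i ≠ 0 ↔ i ∈ S))
      = Fintype.piFinset (fun i => if i ∈ S then Finset.univ.erase 0 else {0}) := by
    ext x
    simp only [mem_filter, mem_univ, true_and, Fintype.mem_piFinset]
    constructor
    · intro h i
      by_cases hi : i ∈ S
      · simp [hi, (h i).2 hi]
      · simpa [hi] using (fun hx => hi ((h i).1 hx))
    · intro h i
      have := h i
      by_cases hi : i ∈ S <;> simp [hi] at this <;> simp [hi, this]
  rw [this, Fintype.card_piFinset]
  have hcard : ∀ i : Fin n, (if i ∈ S then Finset.univ.erase (0 : ZMod p) else {0}).card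
      = if i ∈ S then p - 1 else 1 := by
    intro i
    split_ifs with hi <;> simp [Finset.card_erase_of_mem, ZMod.card]
  simp only [hcard]
  rw [Finset.prod_ite_mem, Finset.univ_inter, Finset.prod_const]

lemma count_solutions (f : Fin n → Fin 3 → ZMod p) :
    (Finset.univ.filter (fun x : Fin n → ZMod p =>
        (∀ j : Fin 3, ∑ i, x i ^ (p-1) * f i j = 0) ∧ (∑ i, x i ^ (p-1)) = 0)).card
    = ∑ S ∈ Finset.univ.powerset,
        if (((S.card : ZMod p) = 0) ∧ ∑ i ∈ S, f i = 0) then (p-1)^S.card else 0 := by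
  classical
  rw [Finset.card_eq_sum_card_fiberwise
    (f := fun x : Fin n → ZMod p => univ.filter (fun i => x i ≠ 0)) (t := univ.powerset)
    (fun x _ => Finset.mem_powerset.2 (Finset.filter_subset _ _))]
  refine Finset.sum_congr rfl fun S _ => ?_
  rw [Finset.filter_filter]
  have key : ∀ x : Fin n → ZMod p, (univ.filter (fun i => x i ≠ 0)) = S →
      (((∀ j : Fin 3, ∑ i, x i ^ (p-1) * f i j = 0) ∧ (∑ i, x i ^ (p-1)) = 0) ↔
        (((S.card : ZMod p) = 0) ∧ ∑ i ∈ S, f i = 0)) := by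
    intro x hx
    have hmem : ∀ i, x i ≠ 0 ↔ i ∈ S := by intro i; rw [← hx]; simp
    have hpow : ∀ i, x i ^ (p - 1) = if i ∈ S then 1 else 0 := by
      intro i; rw [pow_sub_one, if_congr (hmem i) rfl rfl]
    have h1 : ∀ j, ∑ i, x i ^ (p-1) * f i j = ∑ i ∈ S, f i j := by
      intro j
      rw [← Finset.univ_inter S, ← Finset.sum_ite_mem univ S (fun i => f i j)]
      exact Finset.sum_congr rfl fun i _ => by rw [hpow]; split_ifs <;> simp
    have h2 : ∑ i, x i ^ (p-1) = (S.card : ZMod p) := by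
      simp only [hpow]
      rw [Finset.sum_ite_mem univ S (fun _ => (1 : ZMod p)), Finset.univ_inter,
        Finset.sum_const, nsmul_eq_mul, mul_one]
    constructor
    · rintro ⟨ha, hb⟩
      refine ⟨by rw [← h2]; exact hb, ?_⟩
      funext j
      rw [Finset.sum_apply]
      rw [← h1 j]; exact ha j
    · rintro ⟨ha, hb⟩
      refine ⟨fun j => ?_, by rw [h2]; exact ha⟩
      rw [h1 j]
      have := congrFun hb j
      rwa [Finset.sum_apply] at this
  by_cases hS : ((S.card : ZMod p) = 0) ∧ ∑ i ∈ S, f i = 0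
  · rw [if_pos hS, ← fiber_card S]
    congr 1
    ext x
    simp only [Finset.mem_filter, Finset.mem_univ, true_and]
    constructor
    · rintro ⟨-, hsupp⟩ i
      rw [← hsupp]; simp
    · intro hx
      have hsupp : univ.filter (fun i => x i ≠ 0) = S := by ext i; simp [hx i]
      exact ⟨(key x hsupp).2 hS, hsupp⟩
  · rw [if_neg hS]
    rw [Finset.card_eq_zero, Finset.filter_eq_empty_iff]
    rintro x - ⟨hP, hsupp⟩
    exact hS ((key x hsupp).1 hP)

lemma cw_div (f : Fin n → Fin 3 → ZMod p) (hn : 4 * (p-1) < n) :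
    (p : ℕ) ∣ (Finset.univ.filter (fun x : Fin n → ZMod p =>
        (∀ j : Fin 3, ∑ i, x i ^ (p-1) * f i j = 0) ∧ (∑ i, x i ^ (p-1)) = 0)).card := by
  classical
  set g : Fin n → Fin 4 → ZMod p := fun i j => if h : (j : ℕ) < 3 then f i ⟨j, h⟩ else 1 with hg
  set F : Fin 4 → MvPolynomial (Fin n) (ZMod p) :=
    fun j => ∑ i, X i ^ (p-1) * C (g i j) with hF
  have hdeg : ∀ j, (F j).totalDegree ≤ p - 1 := by
    intro j
    refine (totalDegree_finset_sum _ _).trans (Finset.sup_le fun i _ => ?_)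
    refine (totalDegree_mul _ _).trans ?_
    simp [totalDegree_X_pow]
  have hsum : (∑ j : Fin 4, (F j).totalDegree) < Fintype.card (Fin n) := by
    rw [Fintype.card_fin]
    calc ∑ j : Fin 4, (F j).totalDegree ≤ ∑ _j : Fin 4, (p-1) :=
          Finset.sum_le_sum fun j _ => hdeg j
      _ = 4 * (p-1) := by simp [Finset.sum_const]
      _ < n := hn
  have hdvd := char_dvd_card_solutions_of_fintype_sum_lt p hsum
  have heval : ∀ (x : Fin n → ZMod p) j, eval x (F j) = ∑ i, x i ^ (p-1) * g i j := by
    intro x j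
    simp [hF]
  have hequiv : ∀ x : Fin n → ZMod p,
      (∀ j, eval x (F j) = 0) ↔
      ((∀ j : Fin 3, ∑ i, x i ^ (p-1) * f i j = 0) ∧ (∑ i, x i ^ (p-1)) = 0) := by
    intro x
    simp only [heval]
    constructor
    · intro h
      refine ⟨ fun j => ?_, ?_⟩
      · have := h ⟨j, by omega⟩
        simpa [hg] using this
      · have := h 3
        simpa [hg] using this
    · rintro ⟨h1, h2⟩ j
      by_cases hj : (j : ℕ) < 3
      · have := h1 ⟨j, hj⟩
        simpa [hg, hj] using this
      · simpa [hg, hj] using h2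
  have hcardeq : (Finset.univ.filter (fun x : Fin n → ZMod p =>
        (∀ j : Fin 3, ∑ i, x i ^ (p-1) * f i j = 0) ∧ (∑ i, x i ^ (p-1)) = 0)).card
      = Fintype.card {x : Fin n → ZMod p // ∀ j, eval x (F j) = 0} := by
    rw [Fintype.card_subtype]
    congr 1
    ext x
    simp only [Finset.mem_filter, Finset.mem_univ, true_and]
    exact (hequiv x).symm
  rw [hcardeq]
  convert hdvd using 2


open Finset in
theorem stmt_8 (p : ℕ) (hp : p.Prime) (J : Multiset (Fin 3 → ZMod p))
    (hJ : Multiset.card J = 5 * p - 3) :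
    (1 - (N p J : ℤ) + N (2 * p) J - N (3 * p) J + N (4 * p) J) ≡ 0 [ZMOD p] := by
  haveI : Fact p.Prime := ⟨hp⟩
  classical
  set l := J.toList with hl
  set n := l.length with hn
  have hlen : n = 5 * p - 3 := by rw [hn, Multiset.length_toList, hJ]
  set f : Fin n → (Fin 3 → ZMod p) := l.get with hf
  have hJf : J = Multiset.map f Finset.univ.val := by
    rw [Fin.univ_def]
    show J = Multiset.map l.get (↑(List.finRange l.length))
    rw [Multiset.map_coe, ← List.ofFn_eq_map, List.ofFn_get, Multiset.coe_toList]
  -- N in terms of finsets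
  set Nf : ℕ → ℕ := fun k =>
    (Finset.univ.powerset.filter
      (fun S : Finset (Fin n) => S.card = k ∧ ∑ i ∈ S, f i = 0)).card with hNf
  have hNNf : ∀ k, N k J = Nf k := by
    intro k
    rw [hJf]
    show Multiset.card _ = _
    rw [N_count f (fun T => Multiset.card T = k ∧ T.sum = 0)]
    congr 1
    apply Finset.filter_congr
    intro S _
    rw [Multiset.card_map]
    exact Iff.rfl
  clear hf
  clear_value f n l
  -- Chevalley-Warning divisibility
  have hp2 : 2 ≤ p := hp.two_le
  have hlt : 4 * (p - 1) < n := by omega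
  have hdvd := cw_div f hlt
  have hzero : ((∑ S ∈ Finset.univ.powerset,
      if (((S.card : ZMod p) = 0) ∧ ∑ i ∈ S, f i = 0) then (p-1)^S.card else 0 : ℕ)
        : ZMod p) = 0 := by
    rw [← count_solutions f]
    exact (ZMod.natCast_eq_zero_iff _ p).mpr hdvd
  push_cast at hzero
  have hneg : ((p : ZMod p) - 1) = -1 := by rw [ZMod.natCast_self, zero_sub]
  have hpm1 : ((p - 1 : ℕ) : ZMod p) = -1 := by
    rw [Nat.cast_sub hp.one_lt.le, ZMod.natCast_self, zero_sub, Nat.cast_one]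
  rw [hpm1] at hzero
  -- fiberwise sum by cardinality
  have hmaps : ∀ S ∈ (Finset.univ : Finset (Fin n)).powerset,
      S.card ∈ Finset.range (5 * p + 1) := by
    intro S _
    have := Finset.card_le_univ S
    rw [Fintype.card_fin] at this
    rw [Finset.mem_range]
    clear * - hlen this hp2
    omega
  have hfib := Finset.sum_fiberwise_of_maps_to hmaps
    (fun S : Finset (Fin n) =>
      if (((S.card : ZMod p) = 0) ∧ ∑ i ∈ S, f i = 0) then (-1 : ZMod p) ^ S.card else 0)
  rw [hzero] at hfib
  -- inner sums
  have hinner : ∀ k, (∑ S ∈ Finset.univ.powerset.filter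
        (fun S : Finset (Fin n) => S.card = k),
        if (((S.card : ZMod p) = 0) ∧ ∑ i ∈ S, f i = 0) then (-1 : ZMod p) ^ S.card else 0)
      = if (k : ZMod p) = 0 then (-1 : ZMod p) ^ k * (Nf k : ZMod p) else 0 := by
    intro k
    by_cases hk : (k : ZMod p) = 0
    · rw [if_pos hk]
      have hcongr : ∀ S ∈ Finset.univ.powerset.filter
          (fun S : Finset (Fin n) => S.card = k),
          (if (((S.card : ZMod p) = 0) ∧ ∑ i ∈ S, f i = 0) then (-1 : ZMod p) ^ S.card else 0)
          = if (∑ i ∈ S, f i = 0) then (-1 : ZMod p) ^ k else 0 := by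
        intro S hS
        rcases Finset.mem_filter.1 hS with ⟨-, hcard⟩
        rw [hcard]
        simp [hk]
      rw [Finset.sum_congr rfl hcongr, ← Finset.sum_filter, Finset.filter_filter,
        Finset.sum_const, nsmul_eq_mul]
      rw [mul_comm]
    · rw [if_neg hk]
      apply Finset.sum_eq_zero
      intro S hS
      rcases Finset.mem_filter.1 hS with ⟨-, hcard⟩
      rw [hcard, if_neg (by tauto)]
  simp only [hinner] at hfib
  rw [← Finset.sum_filter] at hfib
  have hinj : ∀ a ∈ Finset.range 6, ∀ b ∈ Finset.range 6, p * a = p * b → a = b :=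
    fun a _ b _ h => Nat.eq_of_mul_eq_mul_left hp.pos h
  have hset : (Finset.range (5*p+1)).filter (fun k : ℕ => ((k : ZMod p) = 0))
      = (Finset.range 6).image (fun m => p * m) := by
    ext k
    simp only [Finset.mem_filter, Finset.mem_range, Finset.mem_image,
      ZMod.natCast_eq_zero_iff]
    constructor
    · rintro ⟨hklt, c, rfl⟩
      refine ⟨c, ?_, rfl⟩
      have h6 : p * c < p * 6 := by clear * - hklt hp2; omega
      exact Nat.lt_of_mul_lt_mul_left h6
    · rintro ⟨m, hm, rfl⟩
      refine ⟨?_, ⟨m, rfl⟩⟩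
      have : p * m ≤ p * 5 := Nat.mul_le_mul_left p (by clear * - hm; omega)
      clear * - this hp2
      omega
  rw [hset, Finset.sum_image hinj] at hfib
  have hps : ∀ m : ℕ, ((-1 : ZMod p)) ^ (p * m) = (-1) ^ m := fun m => by
    rw [pow_mul, neg_one_pow_char (ZMod p) p]
  simp only [hps] at hfib
  -- evaluate small sums
  have hNf0 : Nf 0 = 1 := by
    rw [hNf]
    beta_reduce
    rw [show (Finset.univ.powerset.filter
        (fun S : Finset (Fin n) => S.card = 0 ∧ ∑ i ∈ S, f i = 0)) = {∅} from ?_]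
    · exact Finset.card_singleton _
    ext S
    simp only [Finset.mem_filter, Finset.mem_powerset, Finset.mem_singleton,
      Finset.card_eq_zero]
    constructor
    · rintro ⟨-, rfl, -⟩; rfl
    · rintro rfl; simp
  have hNf5 : Nf (p * 5) = 0 := by
    rw [hNf]
    beta_reduce
    rw [Finset.card_eq_zero, Finset.filter_eq_empty_iff]
    rintro S - ⟨hc, -⟩
    have := Finset.card_le_univ S
    rw [Fintype.card_fin] at this
    clear * - this hc hlen hp2
    omega
  simp only [Finset.sum_range_succ, Finset.sum_range_zero, Nat.mul_zero] at hfib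
  rw [hNf0, hNf5] at hfib
  -- conclude
  have hfin : ((1 - (N p J : ℤ) + N (2 * p) J - N (3 * p) J + N (4 * p) J : ℤ) : ZMod p)
      = 0 := by
    push_cast
    rw [hNNf p, hNNf (2*p), hNNf (3*p), hNNf (4*p)]
    rw [show p*1 = p from Nat.mul_one p, show p*2 = 2*p from Nat.mul_comm p 2,
      show p*3 = 3*p from Nat.mul_comm p 3, show p*4 = 4*p from Nat.mul_comm p 4] at hfib
    linear_combination hfib
  have hdvd2 : (p : ℤ) ∣ (1 - (N p J : ℤ) + N (2 * p) J - N (3 * p) J + N (4 * p) J) :=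
    (ZMod.intCast_zmod_eq_zero_iff_dvd _ p).mp hfin
  exact Int.modEq_zero_iff_dvd.mpr hdvd2
end

section
/- Let p be a prime and X a multiset over (ZMod p)^3 with |X| = 9p - 3. Let N^k(X) count zero-sum sub-multisets of cardinality k. If for every multiset J over (ZMod p)^3 with |J| = 4p - 3 one has 1 - N^p(J) + N^{2p}(J) - N^{3p}(J) ≡ 0 (mod p), then 56 - 21·N^p(X) + 6·N^{2p}(X) - N^{3p}(X) ≡ 0 (mod p). -/
open Multiset

variable {α : Type*}

theorem pc_eq_filter (n : ℕ) (s : Multiset α) :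
    s.powersetCard n = (s.powerset).filter (fun t => Multiset.card t = n) := by
  induction s using Multiset.induction generalizing n with
  | empty =>
    cases n <;>
      simp [Multiset.powersetCard_zero_right, Multiset.powerset_zero, Multiset.filter_singleton]
  | cons a t ih =>
    rw [Multiset.powerset_cons, Multiset.filter_add, Multiset.filter_map]
    cases n with
    | zero =>
      have h0 : Multiset.filter ((fun u => Multiset.card u = 0) ∘ Multiset.cons a) t.powerset
          = 0 := by
        rw [Multiset.filter_eq_nil.2]
        intro u _
        simp
      rw [Multiset.powersetCard_zero_left, ← ih, h0, Multiset.map_zero, add_zero,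
        Multiset.powersetCard_zero_left]
    | succ n =>
      rw [Multiset.powersetCard_cons, ih, ih]
      congr 1
      congr 1
      apply Multiset.filter_congr
      intro u _
      simp

theorem filter_bind' (p : α → Prop) [DecidablePred p] (s : Multiset α') (f : α' → Multiset α) :
    Multiset.filter p (s.bind f) = s.bind (fun a => Multiset.filter p (f a)) := by
  induction s using Multiset.induction with
  | empty => simp
  | cons a t ih => simp [Multiset.cons_bind, Multiset.filter_add, ih]

theorem bind_pc_zero (d : ℕ) (s : Multiset α) :
    (s.powersetCard d).bind (fun J => J.powersetCard 0)
      = (Multiset.card s - 0).choose d • s.powersetCard 0 := by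
  have : (s.powersetCard d).bind (fun J => J.powersetCard 0)
      = (s.powersetCard d).bind (fun J => {0}) := by
    apply Multiset.bind_congr
    intro J _
    exact Multiset.powersetCard_zero_left J
  rw [this, Multiset.bind_singleton, Multiset.map_const', Multiset.powersetCard_zero_left,
    Multiset.card_powersetCard, Multiset.nsmul_singleton, Nat.sub_zero]

theorem bind_pc (k d : ℕ) (s : Multiset α) :
    (s.powersetCard (k + d)).bind (fun J => J.powersetCard k)
      = (Multiset.card s - k).choose d • s.powersetCard k := by
  induction s using Multiset.induction generalizing k d with
  | empty =>
    rcases Nat.eq_zero_or_pos (k + d) with h | h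
    · obtain ⟨hk, hd⟩ : k = 0 ∧ d = 0 := by omega
      subst hk; subst hd
      simp [Multiset.powersetCard_zero_left, Multiset.singleton_bind]
    · obtain ⟨m, hm⟩ : ∃ m, k + d = m + 1 := ⟨k + d - 1, by omega⟩
      rw [hm, Multiset.powersetCard_zero_right, Multiset.zero_bind]
      rcases Nat.eq_zero_or_pos k with hk | hk
      · subst hk
        rw [Multiset.powersetCard_zero_left,
          show Multiset.card (0 : Multiset α) - 0 = 0 by simp,
          Nat.choose_eq_zero_of_lt (by omega), zero_smul]
      · obtain ⟨k', hk'⟩ : ∃ k', k = k' + 1 := ⟨k - 1, by omega⟩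
        rw [hk', Multiset.powersetCard_zero_right, smul_zero]
  | cons a t ih =>
    cases k with
    | zero => simpa using bind_pc_zero d (a ::ₘ t)
    | succ k =>
      cases d with
      | zero =>
        rw [Nat.add_zero, Multiset.powersetCard_cons, Multiset.add_bind,
          Multiset.bind_map]
        have h2 : (t.powersetCard k).bind (fun J => (a ::ₘ J).powersetCard (k+1))
            = (t.powersetCard k).bind
              (fun J => J.powersetCard (k+1) + Multiset.map (Multiset.cons a) (J.powersetCard k)) := by
          apply Multiset.bind_congr; intro J _
          exact Multiset.powersetCard_cons k a J
        rw [h2]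
        have h3 : (t.powersetCard k).bind
            (fun J => J.powersetCard (k+1) + Multiset.map (Multiset.cons a) (J.powersetCard k))
            = (t.powersetCard k).bind (fun J => J.powersetCard (k+1))
              + (t.powersetCard k).bind (fun J => Multiset.map (Multiset.cons a) (J.powersetCard k)) :=
          Multiset.bind_add _ _ _
        rw [h3]
        have h4 : (t.powersetCard k).bind (fun J => J.powersetCard (k+1)) = 0 := by
          rw [show (0 : Multiset (Multiset α)) = (t.powersetCard k).bind (fun _ => 0) by
            rw [Multiset.bind_zero]]
          apply Multiset.bind_congr; intro J hJ
          rw [Multiset.mem_powersetCard] at hJ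
          exact Multiset.powersetCard_eq_empty _ (by omega)
        have h5 : (t.powersetCard k).bind (fun J => Multiset.map (Multiset.cons a) (J.powersetCard k))
            = Multiset.map (Multiset.cons a) ((t.powersetCard k).bind (fun J => J.powersetCard k)) :=
          (Multiset.map_bind _ _ _).symm
        have ih1 := ih (k+1) 0
        have ih2 := ih k 0
        rw [Nat.add_zero] at ih1 ih2
        rw [h4, h5, ih1, ih2]
        simp
      | succ d =>
        have hcons : (Multiset.cons a t).powersetCard (k + 1 + (d + 1))
            = t.powersetCard (k + 1 + (d + 1))
              + Multiset.map (Multiset.cons a) (t.powersetCard (k + d + 1)) := by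
          rw [show k + 1 + (d + 1) = (k + d + 1) + 1 by ring]
          exact Multiset.powersetCard_cons _ a t
        rw [hcons, Multiset.add_bind, Multiset.bind_map]
        have h2 : (t.powersetCard (k + d + 1)).bind (fun J => (a ::ₘ J).powersetCard (k+1))
            = (t.powersetCard (k + d + 1)).bind (fun J => J.powersetCard (k+1))
              + Multiset.map (Multiset.cons a)
                ((t.powersetCard (k + d + 1)).bind (fun J => J.powersetCard k)) := by
          rw [Multiset.map_bind, ← Multiset.bind_add]
          apply Multiset.bind_congr; intro J _
          exact Multiset.powersetCard_cons k a J
        rw [h2]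
        have ih1 := ih (k+1) (d+1)
        have ih2 : (t.powersetCard (k + d + 1)).bind (fun J => J.powersetCard (k+1))
            = (Multiset.card t - (k+1)).choose d • t.powersetCard (k+1) := by
          have := ih (k+1) d
          rwa [show k + 1 + d = k + d + 1 by ring] at this
        have ih3 : (t.powersetCard (k + d + 1)).bind (fun J => J.powersetCard k)
            = (Multiset.card t - k).choose (d+1) • t.powersetCard k := by
          have := ih k (d+1)
          rwa [show k + (d + 1) = k + d + 1 by ring] at this
        rw [show k + 1 + (d + 1) = k + d + 1 + 1 by ring] at ih1 ⊢
        rw [ih1, ih2, ih3,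
          Multiset.powersetCard_cons, Multiset.map_nsmul, smul_add, ← add_assoc]
        congr 1
        · rcases le_or_gt (k + 1) (Multiset.card t) with hle | hlt
          · rw [← add_nsmul]
            congr 1
            have h6 : Multiset.card (Multiset.cons a t) - (k+1) = (Multiset.card t - (k+1)) + 1 := by
              rw [Multiset.card_cons]; omega
            rw [h6, Nat.choose_succ_succ, add_comm]
          · rw [Multiset.powersetCard_eq_empty _ hlt]
            simp
        · congr 2
          rw [Multiset.card_cons]
          omega

theorem sum_lemma (P : Multiset α → Prop) [DecidablePred P] (k d : ℕ) (s : Multiset α) :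
    ((s.powersetCard (k + d)).map (fun J => ((J.powersetCard k).filter P).card)).sum
      = (Multiset.card s - k).choose d * ((s.powersetCard k).filter P).card := by
  have h1 : ((s.powersetCard (k + d)).map (fun J => ((J.powersetCard k).filter P).card)).sum
      = Multiset.card ((s.powersetCard (k + d)).bind (fun J => (J.powersetCard k).filter P)) := by
    rw [Multiset.card_bind]
    simp [Function.comp]
  rw [h1, ← filter_bind', bind_pc, Multiset.filter_nsmul, Multiset.card_nsmul]

theorem N_eq {p : ℕ} (k : ℕ) (J : Multiset (Fin 3 → ZMod p)) :
    N k J = ((J.powersetCard k).filter (fun T => Multiset.sum T = 0)).card := by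
  rw [N, pc_eq_filter, Multiset.filter_filter]
  congr 1
  apply Multiset.filter_congr
  intro T _
  tauto

theorem lucas1 {p : ℕ} [Fact p.Prime] (a b c d : ℕ) (ha : a < p) (hb : b < p) :
    (((a + p * c).choose (b + p * d) : ℕ) : ZMod p)
      = ((a.choose b : ℕ) : ZMod p) * ((c.choose d : ℕ) : ZMod p) := by
  have hmod : (a + p * c) % p = a := by
    rw [Nat.add_mul_mod_self_left, Nat.mod_eq_of_lt ha]
  have hdiv : (a + p * c) / p = c := by
    rw [Nat.add_mul_div_left _ _ (Fact.out : p.Prime).pos, Nat.div_eq_of_lt ha, Nat.zero_add]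
  have hmod' : (b + p * d) % p = b := by
    rw [Nat.add_mul_mod_self_left, Nat.mod_eq_of_lt hb]
  have hdiv' : (b + p * d) / p = d := by
    rw [Nat.add_mul_div_left _ _ (Fact.out : p.Prime).pos, Nat.div_eq_of_lt hb, Nat.zero_add]
  have h := Choose.choose_modEq_choose_mod_mul_choose_div
    (p := p) (n := a + p * c) (k := b + p * d)
  rw [hmod, hdiv, hmod', hdiv'] at h
  have h2 := (ZMod.intCast_eq_intCast_iff _ _ _).mpr h
  push_cast at h2 ⊢
  exact h2

theorem stmt_10 (p : ℕ) (hp : p.Prime) (hp7 : 7 < p)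
    (X : Multiset (Fin 3 → ZMod p)) (hX : Multiset.card X = 9 * p - 3)
    (h : ∀ J : Multiset (Fin 3 → ZMod p), Multiset.card J = 4 * p - 3 →
      (1 - (N p J : ℤ) + N (2 * p) J - N (3 * p) J) ≡ 0 [ZMOD p]) :
    (56 - 21 * (N p X : ℤ) + 6 * N (2 * p) X - N (3 * p) X) ≡ 0 [ZMOD p] := by
  haveI : Fact p.Prime := ⟨hp⟩
  set P := X.powersetCard (4 * p - 3) with hP
  set f : Multiset (Fin 3 → ZMod p) → ZMod p :=
    fun J => 1 - (N p J : ZMod p) + (N (2 * p) J : ZMod p) - (N (3 * p) J : ZMod p) with hf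
  -- each term is zero
  have hsum0 : (P.map f).sum = 0 := by
    apply Multiset.sum_eq_zero
    intro x hx
    rcases Multiset.mem_map.1 hx with ⟨J, hJ, rfl⟩
    rw [Multiset.mem_powersetCard] at hJ
    have hJ' := h J hJ.2
    have := (ZMod.intCast_eq_intCast_iff _ _ _).mpr hJ'
    push_cast at this
    rw [hf]
    simpa using this
  -- split the sum
  have hsplit : ∀ Q : Multiset (Multiset (Fin 3 → ZMod p)),
      (Q.map f).sum = (Multiset.card Q : ZMod p)
        - (((Q.map (fun J => N p J)).sum : ℕ) : ZMod p)
        + (((Q.map (fun J => N (2 * p) J)).sum : ℕ) : ZMod p)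
        - (((Q.map (fun J => N (3 * p) J)).sum : ℕ) : ZMod p) := by
    intro Q
    induction Q using Multiset.induction with
    | empty => simp
    | cons a t ih =>
      simp only [Multiset.map_cons, Multiset.sum_cons, Multiset.card_cons, ih]
      push_cast
      rw [hf]
      ring
  -- the three counting identities
  have hk1 : (P.map (fun J => N p J)).sum = (8 * p - 3).choose (3 * p - 3) * N p X := by
    have := sum_lemma (fun T : Multiset (Fin 3 → ZMod p) => Multiset.sum T = 0) p (3 * p - 3) X
    rw [show p + (3 * p - 3) = 4 * p - 3 by omega, hX,
      show 9 * p - 3 - p = 8 * p - 3 by omega] at this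
    simp only [← N_eq] at this
    rw [hP]
    exact this
  have hk2 : (P.map (fun J => N (2 * p) J)).sum
      = (7 * p - 3).choose (2 * p - 3) * N (2 * p) X := by
    have := sum_lemma (fun T : Multiset (Fin 3 → ZMod p) => Multiset.sum T = 0)
      (2 * p) (2 * p - 3) X
    rw [show 2 * p + (2 * p - 3) = 4 * p - 3 by omega, hX,
      show 9 * p - 3 - 2 * p = 7 * p - 3 by omega] at this
    simp only [← N_eq] at this
    rw [hP]
    exact this
  have hk3 : (P.map (fun J => N (3 * p) J)).sum
      = (6 * p - 3).choose (p - 3) * N (3 * p) X := by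
    have := sum_lemma (fun T : Multiset (Fin 3 → ZMod p) => Multiset.sum T = 0)
      (3 * p) (p - 3) X
    rw [show 3 * p + (p - 3) = 4 * p - 3 by omega, hX,
      show 9 * p - 3 - 3 * p = 6 * p - 3 by omega] at this
    simp only [← N_eq] at this
    rw [hP]
    exact this
  have hcard : Multiset.card P = (9 * p - 3).choose (4 * p - 3) := by
    rw [hP, Multiset.card_powersetCard, hX]
  -- Lucas values
  have l0 : (((9 * p - 3).choose (4 * p - 3) : ℕ) : ZMod p) = 56 := by
    have := lucas1 (p := p) (p - 3) (p - 3) 8 3 (by omega) (by omega)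
    rw [show (p - 3) + p * 8 = 9 * p - 3 by omega, show (p - 3) + p * 3 = 4 * p - 3 by omega,
      Nat.choose_self] at this
    rw [this, show Nat.choose 8 3 = 56 from rfl]
    norm_num
  have l1 : (((8 * p - 3).choose (3 * p - 3) : ℕ) : ZMod p) = 21 := by
    have := lucas1 (p := p) (p - 3) (p - 3) 7 2 (by omega) (by omega)
    rw [show (p - 3) + p * 7 = 8 * p - 3 by omega, show (p - 3) + p * 2 = 3 * p - 3 by omega,
      Nat.choose_self] at this
    rw [this, show Nat.choose 7 2 = 21 from rfl]
    norm_num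
  have l2 : (((7 * p - 3).choose (2 * p - 3) : ℕ) : ZMod p) = 6 := by
    have := lucas1 (p := p) (p - 3) (p - 3) 6 1 (by omega) (by omega)
    rw [show (p - 3) + p * 6 = 7 * p - 3 by omega, show (p - 3) + p * 1 = 2 * p - 3 by omega,
      Nat.choose_self] at this
    rw [this, show Nat.choose 6 1 = 6 from rfl]
    norm_num
  have l3 : (((6 * p - 3).choose (p - 3) : ℕ) : ZMod p) = 1 := by
    have := lucas1 (p := p) (p - 3) (p - 3) 5 0 (by omega) (by omega)
    rw [show (p - 3) + p * 5 = 6 * p - 3 by omega, show (p - 3) + p * 0 = p - 3 by omega,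
      Nat.choose_self] at this
    rw [this, show Nat.choose 5 0 = 1 from rfl]
    norm_num
  -- combine
  have main : (56 : ZMod p) - 21 * (N p X : ZMod p) + 6 * (N (2 * p) X : ZMod p)
      - (N (3 * p) X : ZMod p) = 0 := by
    have e := hsplit P
    rw [hsum0, hcard, hk1, hk2, hk3] at e
    push_cast at e
    rw [l0, l1, l2, l3] at e
    linear_combination -e
  rw [← ZMod.intCast_eq_intCast_iff]
  push_cast
  linear_combination main
end

section
/- Let p be an odd prime and let J be the multiset over (ZMod p)^3 consisting of (0,0,0), (1,0,0), (0,1,0), (0,0,1) each with multiplicity p-1 and (1,1,1) with multiplicity (p-1)/2 (so |J| = 4p - 4 + (p-1)/2). Then J has no zero-sum sub-multiset of cardinality p and no zero-sum sub-multiset of cardinality 2p; in particular, N^{2p}(I) = 0 for every sub-multiset I of J of cardinality 4p - 3. -/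
private lemma dvd_two_cases (p n : ℕ) (h : p ∣ n) (h2 : n < 2 * p) : n = 0 ∨ n = p := by
  obtain ⟨k, rfl⟩ := h
  match k with
  | 0 => left; simp
  | 1 => right; simp
  | (k+2) =>
    exfalso
    have : p * 2 ≤ p * (k + 2) := Nat.mul_le_mul_left _ (by omega)
    omega

theorem stmt_19 (p : ℕ) (hp : p.Prime) (hodd : Odd p)
    (J : Multiset (Fin 3 → ZMod p))
    (hJ : J = Multiset.replicate (p - 1) (![0, 0, 0] : Fin 3 → ZMod p)
        + Multiset.replicate (p - 1) ![1, 0, 0]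
        + Multiset.replicate (p - 1) ![0, 1, 0]
        + Multiset.replicate (p - 1) ![0, 0, 1]
        + Multiset.replicate ((p - 1) / 2) ![1, 1, 1]) :
    (¬∃ T ≤ J, Multiset.card T = p ∧ T.sum = 0) ∧
    (¬∃ T ≤ J, Multiset.card T = 2 * p ∧ T.sum = 0) ∧
    ∀ I ≤ J, Multiset.card I = 4 * p - 3 → N (2 * p) I = 0 := by
  haveI : Fact p.Prime := ⟨hp⟩
  haveI : NeZero p := ⟨hp.ne_zero⟩
  have hpodd : p % 2 = 1 := Nat.odd_iff.mp hodd
  have hp3 : 3 ≤ p := by have := hp.two_le; omega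
  -- distinctness of the five vectors
  have hA : (![0,0,0] : Fin 3 → ZMod p) ≠ ![1,0,0] := by
    intro h; have := congrFun h 0; simp at this
  have hB : (![0,0,0] : Fin 3 → ZMod p) ≠ ![0,1,0] := by
    intro h; have := congrFun h 1; simp at this
  have hC : (![0,0,0] : Fin 3 → ZMod p) ≠ ![0,0,1] := by
    intro h; have := congrFun h 2; simp at this
  have hD : (![0,0,0] : Fin 3 → ZMod p) ≠ ![1,1,1] := by
    intro h; have := congrFun h 0; simp at this
  have hE : (![1,0,0] : Fin 3 → ZMod p) ≠ ![0,1,0] := by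
    intro h; have := congrFun h 0; simp at this
  have hF : (![1,0,0] : Fin 3 → ZMod p) ≠ ![0,0,1] := by
    intro h; have := congrFun h 0; simp at this
  have hG : (![1,0,0] : Fin 3 → ZMod p) ≠ ![1,1,1] := by
    intro h; have := congrFun h 1; simp at this
  have hH : (![0,1,0] : Fin 3 → ZMod p) ≠ ![0,0,1] := by
    intro h; have := congrFun h 1; simp at this
  have hI : (![0,1,0] : Fin 3 → ZMod p) ≠ ![1,1,1] := by
    intro h; have := congrFun h 0; simp at this
  have hK : (![0,0,1] : Fin 3 → ZMod p) ≠ ![1,1,1] := by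
    intro h; have := congrFun h 0; simp at this
  have hA' := Ne.symm hA
  have hB' := Ne.symm hB
  have hC' := Ne.symm hC
  have hD' := Ne.symm hD
  have hE' := Ne.symm hE
  have hF' := Ne.symm hF
  have hG' := Ne.symm hG
  have hH' := Ne.symm hH
  have hI' := Ne.symm hI
  have hK' := Ne.symm hK
  -- main lemma
  have key : ∀ T ≤ J, T.sum = 0 →
      Multiset.card T ≤ p - 1 ∨ 2 * p + 1 ≤ Multiset.card T := by
    intro T hT hsum
    set a := T.count ![0,0,0] with ha'
    set b := T.count ![1,0,0] with hb'
    set c := T.count ![0,1,0] with hc'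
    set d := T.count ![0,0,1] with hd'
    set f := T.count ![1,1,1] with hf'
    have ha : a ≤ p - 1 := by
      have := Multiset.count_le_of_le (![0,0,0] : Fin 3 → ZMod p) hT
      simpa [hJ, Multiset.count_replicate, hA, hB, hC, hD, hE, hF, hG, hH, hI, hK, hA', hB', hC', hD', hE', hF', hG', hH', hI', hK'] using this
    have hb : b ≤ p - 1 := by
      have := Multiset.count_le_of_le (![1,0,0] : Fin 3 → ZMod p) hT
      simpa [hJ, Multiset.count_replicate, hA, hB, hC, hD, hE, hF, hG, hH, hI, hK, hA', hB', hC', hD', hE', hF', hG', hH', hI', hK'] using this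
    have hc : c ≤ p - 1 := by
      have := Multiset.count_le_of_le (![0,1,0] : Fin 3 → ZMod p) hT
      simpa [hJ, Multiset.count_replicate, hA, hB, hC, hD, hE, hF, hG, hH, hI, hK, hA', hB', hC', hD', hE', hF', hG', hH', hI', hK'] using this
    have hd : d ≤ p - 1 := by
      have := Multiset.count_le_of_le (![0,0,1] : Fin 3 → ZMod p) hT
      simpa [hJ, Multiset.count_replicate, hA, hB, hC, hD, hE, hF, hG, hH, hI, hK, hA', hB', hC', hD', hE', hF', hG', hH', hI', hK'] using this
    have hf : f ≤ (p - 1) / 2 := by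
      have := Multiset.count_le_of_le (![1,1,1] : Fin 3 → ZMod p) hT
      simpa [hJ, Multiset.count_replicate, hA, hB, hC, hD, hE, hF, hG, hH, hI, hK, hA', hB', hC', hD', hE', hF', hG', hH', hI', hK'] using this
    have hTeq : T = Multiset.replicate a ![0,0,0] + Multiset.replicate b ![1,0,0]
        + Multiset.replicate c ![0,1,0] + Multiset.replicate d ![0,0,1]
        + Multiset.replicate f ![1,1,1] := by
      ext x
      by_cases h0 : x = ![0,0,0]
      · subst h0; simp [Multiset.count_replicate, hA, hB, hC, hD, hE, hF, hG, hH, hI, hK, hA', hB', hC', hD', hE', hF', hG', hH', hI', hK', ha']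
      by_cases h1 : x = ![1,0,0]
      · subst h1; simp [Multiset.count_replicate, hA, hB, hC, hD, hE, hF, hG, hH, hI, hK, hA', hB', hC', hD', hE', hF', hG', hH', hI', hK', hb']
      by_cases h2 : x = ![0,1,0]
      · subst h2; simp [Multiset.count_replicate, hA, hB, hC, hD, hE, hF, hG, hH, hI, hK, hA', hB', hC', hD', hE', hF', hG', hH', hI', hK', hc']
      by_cases h3 : x = ![0,0,1]
      · subst h3; simp [Multiset.count_replicate, hA, hB, hC, hD, hE, hF, hG, hH, hI, hK, hA', hB', hC', hD', hE', hF', hG', hH', hI', hK', hd']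
      by_cases h4 : x = ![1,1,1]
      · subst h4; simp [Multiset.count_replicate, hA, hB, hC, hD, hE, hF, hG, hH, hI, hK, hA', hB', hC', hD', hE', hF', hG', hH', hI', hK', hf']
      · have hx : Multiset.count x T = 0 := by
          have h := Multiset.count_le_of_le x hT
          rw [hJ] at h
          simp only [Multiset.count_add, Multiset.count_replicate] at h
          rw [if_neg (fun hh => h0 hh.symm), if_neg (fun hh => h1 hh.symm),
            if_neg (fun hh => h2 hh.symm), if_neg (fun hh => h3 hh.symm),
            if_neg (fun hh => h4 hh.symm)] at h
          omega
        rw [hx]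
        simp only [Multiset.count_add, Multiset.count_replicate]
        rw [if_neg (fun hh => h0 hh.symm), if_neg (fun hh => h1 hh.symm),
          if_neg (fun hh => h2 hh.symm), if_neg (fun hh => h3 hh.symm),
          if_neg (fun hh => h4 hh.symm)]
    have hcard : Multiset.card T = a + b + c + d + f := by
      rw [hTeq]; simp
    have hsum' : (a • (![0,0,0] : Fin 3 → ZMod p) + b • ![1,0,0] + c • ![0,1,0]
        + d • ![0,0,1] + f • ![1,1,1]) = 0 := by
      rw [hTeq] at hsum; simpa [Multiset.sum_replicate] using hsum
    have e0 := congrFun hsum' 0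
    have e1 := congrFun hsum' 1
    have e2 := congrFun hsum' 2
    simp [nsmul_eq_mul] at e0 e1 e2
    -- e0 : (b : ZMod p) + f = 0  etc.
    have hbf : (((b + f : ℕ)) : ZMod p) = 0 := by push_cast; linear_combination e0
    have hcf : (((c + f : ℕ)) : ZMod p) = 0 := by push_cast; linear_combination e1
    have hdf : (((d + f : ℕ)) : ZMod p) = 0 := by push_cast; linear_combination e2
    rw [ZMod.natCast_eq_zero_iff] at hbf hcf hdf
    have h1 := dvd_two_cases p (b + f) hbf (by omega)
    have h2 := dvd_two_cases p (c + f) hcf (by omega)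
    have h3 := dvd_two_cases p (d + f) hdf (by omega)
    omega
  refine ⟨?_, ?_, ?_⟩
  · rintro ⟨T, hT, hcard, hsum⟩
    rcases key T hT hsum with h | h <;> omega
  · rintro ⟨T, hT, hcard, hsum⟩
    rcases key T hT hsum with h | h <;> omega
  · intro I hI _
    simp only [N, Multiset.card_eq_zero, Multiset.filter_eq_nil]
    intro T hTmem ⟨hcard, hsum⟩
    have hTI : T ≤ I := Multiset.mem_powerset.mp hTmem
    rcases key T (le_trans hTI hI) hsum with h | h <;> omega
end
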